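/- arXiv:2205.04117 — 12 statements merged into one kernel-verified Lean document; each statement's English description precedes it below -/
import Mathlib

section
/- For all real numbers a > 0 and b ≥ 0, the integral ∫₀^∞ t^{-3/2} · exp(−a/t − b·t) dt (Lebesgue integral over the interval (0,∞)) converges and equals √(π/a) · exp(−2·√(a·b)). -/
/-!
The substitution `t = x⁻²` turns the integral into `2 ∫₀^∞ exp (-a x² - b / x²) dx`.
Completing the square, `a x² + b / x² = (√a x - √b / x)² + 2 √(a b)`, and the Cauchy–Schlömilch
transformation `∫₀^∞ g (α x - β / x) dx = (2 α)⁻¹ ∫ g` for even integrable `g` reduces this to the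
Gaussian integral. The transformation itself comes from the change of variables
`u = α x - β / x`, whose Jacobian `α + β / x²` splits into two equal halves because the
inversion `x ↦ β / (α x)` preserves `g (α x - β / x)` and turns `α` into `β / x²`.
-/

open MeasureTheory Real Set

variable {E : Type*} [NormedAddCommGroup E] [NormedSpace ℝ E]

theorem integral_Ioi_comp_div {k : ℝ} (hk : 0 < k) (f : ℝ → E) :
    ∫ x in Ioi 0, (k / x ^ 2) • f (k / x) = ∫ x in Ioi 0, f x := by
  have himage : (fun x : ℝ => k / x) '' Ioi 0 = Ioi 0 := by
    ext y
    refine ⟨?_, fun hy => ⟨k / y, div_pos hk hy, div_div_cancel₀ hk.ne'⟩⟩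
    rintro ⟨x, hx, rfl⟩
    exact div_pos hk hx
  have hinj : InjOn (fun x : ℝ => k / x) (Ioi 0) := fun x _ y _ hxy =>
    inv_injective (mul_left_cancel₀ hk.ne' hxy)
  have hderiv : ∀ x ∈ Ioi (0 : ℝ), HasDerivWithinAt (fun x => k / x) (-(k / x ^ 2)) (Ioi 0) x :=
    fun x hx => by
      simpa [div_eq_mul_inv] using ((hasDerivAt_inv (ne_of_gt hx)).const_mul k).hasDerivWithinAt
  conv_rhs => rw [← himage, integral_image_eq_integral_abs_deriv_smul measurableSet_Ioi hderiv hinj]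
  refine setIntegral_congr_fun measurableSet_Ioi fun x hx => ?_
  rw [abs_neg, abs_of_pos (div_pos hk (pow_pos hx 2))]

section CauchySchlomilch

variable {α β : ℝ}

theorem hasDerivAt_mul_sub_div {x : ℝ} (hx : x ≠ 0) :
    HasDerivAt (fun x => α * x - β / x) (α + β / x ^ 2) x := by
  have := ((hasDerivAt_id x).const_mul α).sub ((hasDerivAt_inv hx).const_mul β)
  rw [show α + β / x ^ 2 = α * 1 - β * -(x ^ 2)⁻¹ by ring]
  exact this

theorem strictMonoOn_mul_sub_div (hα : 0 < α) (hβ : 0 ≤ β) :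
    StrictMonoOn (fun x => α * x - β / x) (Ioi 0) := fun x hx y _ hxy => by
  have : β / y ≤ β / x := div_le_div_of_nonneg_left hβ hx hxy.le
  dsimp only
  nlinarith

theorem image_mul_sub_div_Ioi (hα : 0 < α) (hβ : 0 < β) :
    (fun x => α * x - β / x) '' Ioi 0 = univ := by
  refine eq_univ_of_forall fun y => ?_
  -- the positive root of `α x² - y x - β = 0`
  set r := √(y ^ 2 + 4 * α * β)
  have hr : r ^ 2 = y ^ 2 + 4 * α * β := sq_sqrt (by positivity)
  have hyr : |y| < r := by
    rw [← sqrt_sq_eq_abs]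
    exact sqrt_lt_sqrt (sq_nonneg y) (by nlinarith [mul_pos hα hβ])
  have hx : 0 < (y + r) / (2 * α) := div_pos (by linarith [neg_abs_le y]) (by positivity)
  have hyr0 : y + r ≠ 0 := by linarith [neg_abs_le y]
  refine ⟨(y + r) / (2 * α), hx, ?_⟩
  field_simp
  linear_combination hr

theorem integral_Ioi_mul_add_div_sq_smul_comp (hα : 0 < α) (hβ : 0 < β) (g : ℝ → E) :
    ∫ x in Ioi 0, (α + β / x ^ 2) • g (α * x - β / x) = ∫ y, g y := by
  have h := integral_image_eq_integral_abs_deriv_smul measurableSet_Ioi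
    (fun x hx => (hasDerivAt_mul_sub_div (ne_of_gt hx)).hasDerivWithinAt)
    (strictMonoOn_mul_sub_div hα hβ.le).injOn g
  rw [image_mul_sub_div_Ioi hα hβ, Measure.restrict_univ] at h
  rw [h]
  refine setIntegral_congr_fun measurableSet_Ioi fun x hx => ?_
  rw [abs_of_pos (by positivity)]

theorem integrableOn_Ioi_mul_add_div_sq_smul_comp (hα : 0 < α) (hβ : 0 < β)
    {g : ℝ → E} (hg : Integrable g) :
    IntegrableOn (fun x => (α + β / x ^ 2) • g (α * x - β / x)) (Ioi 0) := by
  have h := integrableOn_image_iff_integrableOn_abs_deriv_smul measurableSet_Ioi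
    (fun x hx => (hasDerivAt_mul_sub_div (ne_of_gt hx)).hasDerivWithinAt)
    (strictMonoOn_mul_sub_div hα hβ.le).injOn g
  rw [image_mul_sub_div_Ioi hα hβ, integrableOn_univ] at h
  refine (h.mp hg).congr_fun (fun x hx => ?_) measurableSet_Ioi
  dsimp only
  rw [abs_of_pos (by positivity)]

theorem integrableOn_Ioi_comp_mul_sub_div (hα : 0 < α) (hβ : 0 < β)
    {g : ℝ → E} (hg : Integrable g) :
    IntegrableOn (fun x => g (α * x - β / x)) (Ioi 0) := by
  have h := integrableOn_Ioi_mul_add_div_sq_smul_comp hα hβ hg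
  -- the weight `α + β / x ^ 2 ≥ α` can be divided out
  have hw : ∀ x ∈ Ioi (0 : ℝ), α ≤ α + β / x ^ 2 := fun x hx => by
    linarith [div_pos hβ (pow_pos hx 2)]
  refine IntegrableOn.congr_fun (h.bdd_smul α⁻¹ (φ := fun x => (α + β / x ^ 2)⁻¹) ?_ ?_)
    (fun x hx => ?_) measurableSet_Ioi
  · exact (by fun_prop : Measurable fun x : ℝ => (α + β / x ^ 2)⁻¹).aestronglyMeasurable
  · filter_upwards [ae_restrict_mem measurableSet_Ioi] with x hx
    rw [norm_inv, Real.norm_of_nonneg (by linarith [hw x hx])]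
    exact inv_anti₀ hα (hw x hx)
  · rw [Pi.smul_apply', smul_smul, inv_mul_cancel₀ (by linarith [hw x hx]), one_smul]

/-- The Cauchy–Schlömilch transformation. -/
theorem integral_Ioi_comp_mul_sub_div (hα : 0 < α) (hβ : 0 < β) {g : ℝ → E}
    (hg_even : ∀ y, g (-y) = g y) (hg : Integrable g) :
    ∫ x in Ioi 0, g (α * x - β / x) = (2 * α)⁻¹ • ∫ y, g y := by
  set F := fun x => g (α * x - β / x)
  have hF : IntegrableOn F (Ioi 0) := integrableOn_Ioi_comp_mul_sub_div hα hβ hg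
  -- `x ↦ (β / α) / x` swaps `α x` and `β / x`, hence fixes `F` by evenness of `g`
  have hF_inv : ∀ x ∈ Ioi (0 : ℝ), F (β / α / x) = F x := fun x hx => by
    have hx : x ≠ 0 := ne_of_gt hx
    simp only [F]
    rw [← hg_even]
    congr 1
    field_simp
    ring
  have hβF : ∫ x in Ioi 0, (β / x ^ 2) • F x = α • ∫ x in Ioi 0, F x := by
    rw [← integral_Ioi_comp_div (div_pos hβ hα) F, ← integral_smul]
    refine setIntegral_congr_fun measurableSet_Ioi fun x hx => ?_
    rw [hF_inv x hx, smul_smul]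
    congr 1
    field_simp
  have hαF : IntegrableOn (fun x => α • F x) (Ioi 0) := hF.smul α
  have hβF_int : IntegrableOn (fun x => (β / x ^ 2) • F x) (Ioi 0) := by
    refine ((integrableOn_Ioi_mul_add_div_sq_smul_comp hα hβ hg).sub hαF).congr_fun
      (fun x _ => ?_) measurableSet_Ioi
    simp only [F, Pi.sub_apply, add_smul, add_sub_cancel_left]
  have h := integral_Ioi_mul_add_div_sq_smul_comp hα hβ g
  simp only [add_smul] at h
  rw [integral_add hαF hβF_int, integral_smul, hβF, ← two_smul ℝ, smul_smul] at h
  rw [← h, smul_smul, inv_mul_cancel₀ (by positivity), one_smul]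

end CauchySchlomilch

section GaussianWithInverseSquare

variable {a b : ℝ}

theorem integrableOn_exp_neg_mul_sq_sub_div_sq (ha : 0 < a) (hb : 0 ≤ b) :
    IntegrableOn (fun x => exp (-a * x ^ 2 - b / x ^ 2)) (Ioi 0) := by
  refine (integrable_exp_neg_mul_sq ha).integrableOn.mono'
    (by fun_prop : Measurable fun x : ℝ => exp (-a * x ^ 2 - b / x ^ 2)).aestronglyMeasurable ?_
  filter_upwards with x
  rw [norm_of_nonneg (exp_nonneg _), exp_le_exp]
  linarith [div_nonneg hb (sq_nonneg x)]

theorem integral_exp_neg_mul_sq_sub_div_sq (ha : 0 < a) (hb : 0 ≤ b) :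
    ∫ x in Ioi 0, exp (-a * x ^ 2 - b / x ^ 2) = √(π / a) / 2 * exp (-2 * √(a * b)) := by
  rcases hb.eq_or_lt with rfl | hb
  · simpa using integral_gaussian_Ioi a
  have hsa : √a ^ 2 = a := sq_sqrt ha.le
  have hsb : √b ^ 2 = b := sq_sqrt hb.le
  have hsq : ∀ x ∈ Ioi (0 : ℝ), exp (-a * x ^ 2 - b / x ^ 2) =
      exp (-2 * √(a * b)) * exp (-(√a * x - √b / x) ^ 2) := fun x hx => by
    have hx : x ≠ 0 := ne_of_gt hx
    rw [← exp_add, sqrt_mul ha.le]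
    congr 1
    field_simp
    linear_combination x ^ 4 * hsa + hsb
  have hg : Integrable fun y : ℝ => exp (-y ^ 2) := by
    simpa using integrable_exp_neg_mul_sq one_pos
  rw [setIntegral_congr_fun measurableSet_Ioi hsq, integral_const_mul,
    integral_Ioi_comp_mul_sub_div (sqrt_pos.2 ha) (sqrt_pos.2 hb) (fun y => by simp) hg,
    smul_eq_mul, sqrt_div pi_pos.le]
  have hgauss := integral_gaussian 1
  simp only [neg_mul, one_mul, div_one] at hgauss
  rw [hgauss]
  field_simp

end GaussianWithInverseSquare

theorem stmt_0 (a b : ℝ) (ha : 0 < a) (hb : 0 ≤ b) :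
    IntegrableOn (fun t : ℝ => t ^ (-(3:ℝ)/2) * Real.exp (-a / t - b * t)) (Ioi 0) volume ∧
    ∫ t in Ioi (0:ℝ), t ^ (-(3:ℝ)/2) * Real.exp (-a / t - b * t) =
      Real.sqrt (π / a) * Real.exp (-2 * Real.sqrt (a * b)) := by
  set f := fun t : ℝ => t ^ (-(3:ℝ)/2) * exp (-a / t - b * t)
  have hsubst : ∀ x ∈ Ioi (0 : ℝ),
      (|(-2 : ℝ)| * x ^ ((-2 : ℝ) - 1)) • f (x ^ (-2 : ℝ)) = 2 * exp (-a * x ^ 2 - b / x ^ 2) := by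
    intro x hx
    have hx : 0 < x := hx
    have hjac : x ^ ((-2 : ℝ) - 1) * (x ^ (-2 : ℝ)) ^ (-(3:ℝ)/2) = 1 := by
      rw [← rpow_mul hx.le, ← rpow_add hx]
      norm_num
    have hpow : x ^ (-2 : ℝ) = (x ^ 2)⁻¹ := by rw [rpow_neg hx.le, rpow_two]
    simp only [f, smul_eq_mul]
    rw [abs_neg, abs_two, mul_assoc, ← mul_assoc (x ^ _), hjac, one_mul, hpow]
    field_simp
  refine ⟨(integrableOn_Ioi_comp_rpow_iff f (p := -2) (by norm_num)).mp
    (IntegrableOn.congr_fun ((integrableOn_exp_neg_mul_sq_sub_div_sq ha hb).const_mul 2)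
      (fun x hx => (hsubst x hx).symm) measurableSet_Ioi), ?_⟩
  rw [← integral_comp_rpow_Ioi f (p := -2) (by norm_num),
    setIntegral_congr_fun measurableSet_Ioi hsubst, integral_const_mul,
    integral_exp_neg_mul_sq_sub_div_sq ha hb]
  ring
end

section
/- The function s ↦ Γ(s − 1/2) · (Γ(s))⁻¹ from ℂ to ℂ is differentiable at s = 0 with derivative equal to −2·√π. -/
/-!
Since `1/Γ` is entire with `1/Γ(s) = s · 1/Γ(s + 1)`, it vanishes at `0` with derivative
`1/Γ(1) = 1` there. In the product rule for `Γ(s - 1/2) · 1/Γ(s)` at `0` the term carrying the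
derivative of `Γ(s - 1/2)` is therefore killed, and what remains is `Γ(-1/2) = -2√π`, obtained
from `Γ(1/2) = √π` by the functional equation.
-/

open Real

theorem DifferentiableAt.hasDerivAt_mul_of_right_eq_zero {𝕜 𝔸 : Type*}
    [NontriviallyNormedField 𝕜] [NormedRing 𝔸] [NormedAlgebra 𝕜 𝔸] {f g : 𝕜 → 𝔸} {g' : 𝔸}
    {x : 𝕜} (hf : DifferentiableAt 𝕜 f x) (hg : HasDerivAt g g' x) (hgx : g x = 0) :
    HasDerivAt (fun y => f y * g y) (f x * g') x := by
  simpa [hgx] using hf.hasDerivAt.fun_mul hg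

namespace Complex

-- Also true at `s = 0`, where both sides vanish because `Γ 0 = 0`.
theorem inv_Gamma_eq_mul_inv_Gamma_add_one (s : ℂ) :
    (Gamma s)⁻¹ = s * (Gamma (s + 1))⁻¹ := by
  rcases eq_or_ne s 0 with rfl | hs
  · simp [Gamma_zero]
  · rw [Gamma_add_one s hs, mul_inv, ← mul_assoc, mul_inv_cancel₀ hs, one_mul]

theorem hasDerivAt_inv_Gamma_zero : HasDerivAt (fun s => (Gamma s)⁻¹) 1 0 := by
  have h : HasDerivAt (fun s => (Gamma (s + 1))⁻¹ * s) ((Gamma (0 + 1))⁻¹ * 1) 0 :=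
    (differentiable_one_div_Gamma.comp (differentiable_id.add_const 1) 0
      ).hasDerivAt_mul_of_right_eq_zero (hasDerivAt_id 0) rfl
  rw [zero_add, Gamma_one, inv_one, one_mul] at h
  convert h using 2 with s
  rw [inv_Gamma_eq_mul_inv_Gamma_add_one, mul_comm]

theorem Gamma_neg_one_half : Gamma (-(1 / 2)) = ((-2 * √π : ℝ) : ℂ) := by
  have h : Gamma (-(1 / 2) + 1) = -(1 / 2) * Gamma (-(1 / 2)) := Gamma_add_one _ (by norm_num)
  rw [show (-(1 / 2) + 1 : ℂ) = ((1 / 2 : ℝ) : ℂ) by norm_num, Gamma_ofReal,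
    Real.Gamma_one_half_eq] at h
  push_cast
  linear_combination 2 * h

theorem differentiableAt_Gamma_neg_one_half : DifferentiableAt ℂ Gamma (-(1 / 2)) := by
  refine differentiableAt_Gamma _ fun m h => ?_
  have hre : (1 / 2 : ℝ) = m := by simpa using congrArg re h
  rcases m with _ | m
  · norm_num at hre
  · push_cast at hre
    linarith

end Complex

theorem stmt_1 :
    HasDerivAt (fun s : ℂ => Complex.Gamma (s - 1/2) * (Complex.Gamma s)⁻¹)
      ((-2 * Real.sqrt π : ℝ) : ℂ) 0 := by
  have hshift : DifferentiableAt ℂ (fun s : ℂ => Complex.Gamma (s - 1/2)) 0 := by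
    refine DifferentiableAt.comp (g := Complex.Gamma) 0 ?_ (differentiableAt_id.sub_const _)
    simpa using Complex.differentiableAt_Gamma_neg_one_half
  have h := hshift.hasDerivAt_mul_of_right_eq_zero Complex.hasDerivAt_inv_Gamma_zero
    (by simp [Complex.Gamma_zero])
  rwa [zero_sub, mul_one, Complex.Gamma_neg_one_half] at h
end

section
/- Let a > 0 and b ≥ 0 be real numbers, and let F₂ : ℕ → ℝ be a nonnegative function such that there exists C > 0 with F₂(j) ≤ C·(j+1)^b for all j ∈ ℕ. Then the function F₃ defined for t > 0 by F₃(t) = Σ_{j=0}^∞ F₂(j)·exp(−a·j²/t) satisfies F₃(t) = O(t^{(b+1)/2}) as t → ∞. -/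
/-!
Put `c = a / t`. Since `√c (j + 1) ≤ √c j + 1` for `c ≤ 1` and `(u + 1) ^ b ≤ K e^{u²/2}`, the
weight `(j + 1) ^ b e^{-c j²}` is at most `K c^{-b/2} e^{-c j²/2}`. Comparing the remaining
Gaussian sum with the Gaussian integral bounds it by `1 + √(2π/c)/2 = O(c^{-1/2})`, so the whole
sum is `O(c^{-(b+1)/2}) = O(t^{(b+1)/2})`.
-/

open Real Filter Set Asymptotics Nat Topology

lemma antitoneOn_exp_neg_mul_sq {c : ℝ} (hc : 0 ≤ c) :
    AntitoneOn (fun x : ℝ => exp (-c * x ^ 2)) (Ici 0) := by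
  intro x hx y _ hxy
  simp only [neg_mul]
  gcongr

lemma summable_exp_neg_mul_sq {c : ℝ} (hc : 0 < c) :
    Summable fun j : ℕ => exp (-c * (j : ℝ) ^ 2) :=
  (antitoneOn_exp_neg_mul_sq hc.le).summable_of_integrableOn_Ioi_zero
    (integrable_exp_neg_mul_sq hc).integrableOn fun _ _ => (exp_pos _).le

lemma tsum_exp_neg_mul_sq_le {c : ℝ} (hc : 0 < c) :
    ∑' j : ℕ, exp (-c * (j : ℝ) ^ 2) ≤ 1 + √(π / c) / 2 := by
  have h := (antitoneOn_exp_neg_mul_sq hc.le).tsum_le_integral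
    (integrable_exp_neg_mul_sq hc).integrableOn fun _ _ => (exp_pos _).le
  rwa [integral_gaussian_Ioi, zero_pow two_ne_zero, mul_zero, exp_zero] at h

lemma tsum_exp_neg_mul_sq_le_div_sqrt {c : ℝ} (hc0 : 0 < c) (hc1 : c ≤ 1) :
    ∑' j : ℕ, exp (-c * (j : ℝ) ^ 2) ≤ (1 + √π) / √c := by
  have hsc : 0 < √c := sqrt_pos.2 hc0
  have hone : 1 ≤ 1 / √c := by rw [le_div_iff₀ hsc, one_mul]; exact sqrt_le_one.2 hc1
  calc ∑' j : ℕ, exp (-c * (j : ℝ) ^ 2) ≤ 1 + √(π / c) / 2 := tsum_exp_neg_mul_sq_le hc0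
    _ ≤ 1 / √c + √π / √c := by
        rw [sqrt_div' _ hc0.le]
        linarith [div_nonneg (sqrt_nonneg π) hsc.le]
    _ = (1 + √π) / √c := by ring

lemma exists_rpow_add_one_le_mul_exp_sq (b : ℝ) :
    ∃ K > 0, ∀ u : ℝ, 0 ≤ u → (u + 1) ^ b ≤ K * exp (u ^ 2 / 2) := by
  set n := ⌈b⌉₊
  refine ⟨n ! * exp (3 / 2), by positivity, fun u hu => ?_⟩
  calc (u + 1) ^ b ≤ (u + 1) ^ (n : ℝ) :=
        rpow_le_rpow_of_exponent_le (by linarith) (Nat.le_ceil b)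
    _ ≤ n ! * exp (u + 1) := by
        rw [rpow_natCast, ← div_le_iff₀' (by positivity)]
        exact pow_div_factorial_le_exp _ (by linarith) n
    _ ≤ n ! * exp (3 / 2) * exp (u ^ 2 / 2) := by
        rw [mul_assoc, ← exp_add]
        gcongr _ * exp ?_
        nlinarith [sq_nonneg (u - 1)]

lemma exists_rpow_add_one_mul_exp_neg_mul_sq_le {b : ℝ} (hb : 0 ≤ b) :
    ∃ K > 0, ∀ c : ℝ, 0 < c → c ≤ 1 → ∀ x : ℝ, 0 ≤ x →
      (x + 1) ^ b * exp (-c * x ^ 2) ≤ K * c ^ (-(b / 2)) * exp (-(c / 2) * x ^ 2) := by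
  obtain ⟨K, hK0, hK⟩ := exists_rpow_add_one_le_mul_exp_sq b
  refine ⟨K, hK0, fun c hc0 hc1 x hx => ?_⟩
  have hsc : √c ≤ 1 := sqrt_le_one.2 hc1
  have hscale : √c * (x + 1) ≤ √c * x + 1 := by nlinarith
  have hpow : (√c) ^ b = c ^ (b / 2) := by
    rw [sqrt_eq_rpow, ← rpow_mul hc0.le]; ring_nf
  calc (x + 1) ^ b * exp (-c * x ^ 2)
      = c ^ (-(b / 2)) * (√c * (x + 1)) ^ b * exp (-c * x ^ 2) := by
        rw [mul_rpow (sqrt_nonneg c) (by linarith), hpow, rpow_neg hc0.le, ← mul_assoc,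
          inv_mul_cancel₀ (rpow_pos_of_pos hc0 _).ne', one_mul]
    _ ≤ c ^ (-(b / 2)) * (K * exp ((√c * x) ^ 2 / 2)) * exp (-c * x ^ 2) := by
        gcongr
        exact (rpow_le_rpow (by positivity) hscale hb).trans (hK _ (by positivity))
    _ = K * c ^ (-(b / 2)) * exp (-(c / 2) * x ^ 2) := by
        rw [mul_pow, sq_sqrt hc0.le, mul_assoc, mul_assoc, ← exp_add]
        ring_nf

lemma summable_rpow_add_one_mul_exp_neg_mul_sq {b c : ℝ} (hb : 0 ≤ b) (hc : 0 < c) :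
    Summable fun j : ℕ => ((j : ℝ) + 1) ^ b * exp (-c * (j : ℝ) ^ 2) := by
  obtain ⟨K, hK0, hK⟩ := exists_rpow_add_one_mul_exp_neg_mul_sq_le hb
  have hc' : 0 < min c 1 := lt_min hc one_pos
  refine .of_nonneg_of_le (fun j => by positivity) (fun j => ?_)
    ((summable_exp_neg_mul_sq (half_pos hc')).mul_left (K * min c 1 ^ (-(b / 2))))
  refine le_trans ?_ (hK _ hc' (min_le_right c 1) j (Nat.cast_nonneg j))
  gcongr
  exact min_le_left c 1

lemma isBigO_tsum_rpow_add_one_mul_exp_neg_mul_sq {b : ℝ} (hb : 0 ≤ b) :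
    (fun c : ℝ => ∑' j : ℕ, ((j : ℝ) + 1) ^ b * exp (-c * (j : ℝ) ^ 2)) =O[𝓝[>] 0]
      fun c : ℝ => c ^ (-((b + 1) / 2)) := by
  obtain ⟨K, hK0, hK⟩ := exists_rpow_add_one_mul_exp_neg_mul_sq_le hb
  refine .of_bound (K * (1 + √π) * √2) ?_
  filter_upwards [Ioo_mem_nhdsGT one_pos] with c ⟨hc0, hc1⟩
  rw [norm_of_nonneg (tsum_nonneg fun j => by positivity), norm_of_nonneg (by positivity)]
  calc ∑' j : ℕ, ((j : ℝ) + 1) ^ b * exp (-c * (j : ℝ) ^ 2)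
      ≤ ∑' j : ℕ, K * c ^ (-(b / 2)) * exp (-(c / 2) * (j : ℝ) ^ 2) :=
        (summable_rpow_add_one_mul_exp_neg_mul_sq hb hc0).tsum_le_tsum
          (fun j => hK c hc0 hc1.le j (Nat.cast_nonneg j))
          ((summable_exp_neg_mul_sq (half_pos hc0)).mul_left _)
    _ ≤ K * c ^ (-(b / 2)) * ((1 + √π) / √(c / 2)) := by
        rw [tsum_mul_left]
        gcongr
        exact tsum_exp_neg_mul_sq_le_div_sqrt (half_pos hc0) (by linarith)
    _ = K * (1 + √π) * √2 * c ^ (-((b + 1) / 2)) := by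
        rw [show -((b + 1) / 2) = -(b / 2) + -(1 / 2) by ring, rpow_add hc0,
          rpow_neg hc0.le (1 / 2), ← sqrt_eq_rpow, sqrt_div' _ (by norm_num : (0:ℝ) ≤ 2)]
        field_simp

lemma tendsto_const_div_atTop_nhdsGT_zero {a : ℝ} (ha : 0 < a) :
    Tendsto (fun t : ℝ => a / t) atTop (𝓝[>] 0) :=
  tendsto_nhdsWithin_iff.2 ⟨tendsto_const_nhds.div_atTop tendsto_id,
    (eventually_gt_atTop 0).mono fun _ ht => div_pos ha ht⟩

theorem stmt_2 (a b : ℝ) (ha : 0 < a) (hb : 0 ≤ b) (F₂ : ℕ → ℝ)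
    (hF₂ : ∀ j, 0 ≤ F₂ j)
    (hbound : ∃ C > 0, ∀ j : ℕ, F₂ j ≤ C * ((j : ℝ) + 1) ^ b) :
    (∀ t : ℝ, 0 < t → Summable fun j : ℕ => F₂ j * Real.exp (-a * (j : ℝ) ^ 2 / t)) ∧
    (fun t : ℝ => ∑' j : ℕ, F₂ j * Real.exp (-a * (j : ℝ) ^ 2 / t)) =O[atTop]
      fun t : ℝ => t ^ ((b + 1) / 2) := by
  obtain ⟨C, -, hC⟩ := hbound
  have hterm (t : ℝ) (j : ℕ) : F₂ j * exp (-a * (j : ℝ) ^ 2 / t) ≤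
      C * (((j : ℝ) + 1) ^ b * exp (-(a / t) * (j : ℝ) ^ 2)) := by
    rw [← mul_assoc, show -a * (j : ℝ) ^ 2 / t = -(a / t) * (j : ℝ) ^ 2 by ring]
    exact mul_le_mul_of_nonneg_right (hC j) (exp_pos _).le
  have hsum (t : ℝ) (ht : 0 < t) : Summable fun j : ℕ => F₂ j * exp (-a * (j : ℝ) ^ 2 / t) :=
    .of_nonneg_of_le (fun j => mul_nonneg (hF₂ j) (exp_pos _).le) (hterm t)
      ((summable_rpow_add_one_mul_exp_neg_mul_sq hb (div_pos ha ht)).mul_left C)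
  refine ⟨hsum, ?_⟩
  calc (fun t : ℝ => ∑' j : ℕ, F₂ j * exp (-a * (j : ℝ) ^ 2 / t))
      =O[atTop] fun t => ∑' j : ℕ, ((j : ℝ) + 1) ^ b * exp (-(a / t) * (j : ℝ) ^ 2) := by
        refine .of_bound C ?_
        filter_upwards [eventually_gt_atTop 0] with t ht
        rw [norm_of_nonneg (tsum_nonneg fun j => mul_nonneg (hF₂ j) (exp_pos _).le),
          norm_of_nonneg (tsum_nonneg fun j => by positivity), ← tsum_mul_left]
        exact (hsum t ht).tsum_le_tsum (hterm t)
          ((summable_rpow_add_one_mul_exp_neg_mul_sq hb (div_pos ha ht)).mul_left C)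
    _ =O[atTop] fun t => (a / t) ^ (-((b + 1) / 2)) :=
        (isBigO_tsum_rpow_add_one_mul_exp_neg_mul_sq hb).comp_tendsto
          (tendsto_const_div_atTop_nhdsGT_zero ha)
    _ =O[atTop] fun t => t ^ ((b + 1) / 2) := by
        refine ((isBigO_refl _ atTop).const_mul_left (a ^ (-((b + 1) / 2)))).congr' ?_ .rfl
        filter_upwards [eventually_gt_atTop 0] with t ht
        rw [div_rpow ha.le ht.le, rpow_neg ht.le, div_inv_eq_mul]
end

section
/- Let f : ℝ → ℝ be continuous on (0, 1], and suppose there is a constant C such that |f(t) · log(t) / t| ≤ C for all t ∈ (0, 1]. Then the function s ↦ (s / Γ(s)) · ∫₀¹ t^{s−1} f(t) dt (a real-variable function, defined for real s in a neighbourhood of 0; the integral is the Lebesgue integral over (0,1], which converges under the stated hypothesis for s > −1) is differentiable at s = 0 with derivative equal to 0. -/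
/-!
Since `Γ (s + 1) = s Γ s`, we have `s / Γ s = s ^ 2 / Γ (s + 1)`, and `1 / Γ (s + 1)` is
continuous at `0`. The hypothesis forces `|f t| ≤ K t` on `(0, 1]`: near `0` because there
`|log t| ≥ 1`, near `1` because `f` is bounded on the compact set `[e⁻¹, 1]`. Hence the integral
is bounded by `K / (s + 1)` near `s = 0`, the whole function is `O(s ^ 2)` at `0`, and so its
derivative there vanishes.
-/

open MeasureTheory Real Set

open Asymptotics Filter Topology

theorem Asymptotics.IsBigO.hasDerivAt_sq_smul {𝕜 F : Type*} [NontriviallyNormedField 𝕜]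
    [NormedAddCommGroup F] [NormedSpace 𝕜 F] {b : 𝕜 → F} {x₀ : 𝕜}
    (hb : b =O[𝓝 x₀] fun _ => (1 : ℝ)) :
    HasDerivAt (fun x => (x - x₀) ^ 2 • b x) 0 x₀ := by
  have hsq : (fun x => (x - x₀) ^ 2) =O[𝓝 x₀] fun x => ‖x - x₀‖ ^ 2 :=
    (isBigO_refl _ _).norm_right.congr_right fun x => norm_pow (x - x₀) 2
  have h : (fun x => (x - x₀) ^ 2 • b x) =O[𝓝 x₀] fun x => ‖x - x₀‖ ^ 2 := by
    simpa only [smul_eq_mul, mul_one] using hsq.smul hb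
  simpa using (h.hasFDerivAt (𝕜 := 𝕜) one_lt_two).hasDerivAt

theorem continuousAt_Gamma_of_pos {s : ℝ} (hs : 0 < s) : ContinuousAt Gamma s :=
  (differentiableAt_Gamma fun m =>
    ((neg_nonpos.mpr m.cast_nonneg).trans_lt hs).ne').continuousAt

theorem div_Gamma_eq_sq_mul_inv_Gamma_add_one (s : ℝ) :
    s / Gamma s = s ^ 2 * (Gamma (s + 1))⁻¹ := by
  rcases eq_or_ne s 0 with rfl | hs
  · simp
  · rw [Gamma_add_one hs]
    field_simp

theorem abs_le_mul_of_abs_mul_log_div_le {a C t : ℝ} (ht : t ∈ Ioc 0 (exp (-1)))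
    (h : |a * log t / t| ≤ C) : |a| ≤ C * t := by
  have hlog : log t ≤ -1 := by
    rw [← log_exp (-1)]
    exact log_le_log ht.1 ht.2
  rw [abs_div, abs_mul, abs_of_pos ht.1, div_le_iff₀ ht.1,
    abs_of_nonpos (a := log t) (by linarith)] at h
  nlinarith [abs_nonneg a]

theorem exists_abs_le_mul_of_abs_mul_log_div_le {f : ℝ → ℝ} (hf : ContinuousOn f (Ioc 0 1))
    {C : ℝ} (hC : ∀ t ∈ Ioc (0:ℝ) 1, |f t * log t / t| ≤ C) :
    ∃ K, ∀ t ∈ Ioc (0:ℝ) 1, |f t| ≤ K * t := by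
  obtain ⟨M, hM⟩ := isCompact_Icc.exists_bound_of_continuousOn
    (hf.mono fun t ht => ⟨(exp_pos (-1)).trans_le ht.1, ht.2⟩ :
      ContinuousOn f (Icc (exp (-1)) 1))
  refine ⟨max C (M * exp 1), fun t ht => ?_⟩
  rcases le_or_gt t (exp (-1)) with hsmall | hlarge
  · exact (abs_le_mul_of_abs_mul_log_div_le ⟨ht.1, hsmall⟩ (hC t ht)).trans
      (by gcongr; exacts [ht.1.le, le_max_left _ _])
  · have hM0 : 0 ≤ M :=
      (norm_nonneg _).trans (hM 1 ⟨exp_le_one_iff.mpr (by norm_num), le_rfl⟩)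
    have het : 1 ≤ exp 1 * t := by
      calc (1 : ℝ) = exp 1 * exp (-1) := by rw [← exp_add]; norm_num
        _ ≤ exp 1 * t := by gcongr
    calc |f t| ≤ M := hM t ⟨hlarge.le, ht.2⟩
      _ ≤ M * exp 1 * t := by rw [mul_assoc]; exact le_mul_of_one_le_right hM0 het
      _ ≤ max C (M * exp 1) * t := by gcongr; exacts [ht.1.le, le_max_right _ _]

section RpowIntegral

variable {f : ℝ → ℝ} {K : ℝ}

theorem norm_setIntegral_rpow_sub_one_mul_le {s : ℝ} (hs : -1 < s)
    (hf : ∀ t ∈ Ioc (0:ℝ) 1, |f t| ≤ K * t) :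
    ‖∫ t in Ioc (0:ℝ) 1, t ^ (s - 1) * f t‖ ≤ K / (s + 1) := by
  have hint : IntegrableOn (fun t : ℝ => K * t ^ s) (Ioc 0 1) :=
    ((intervalIntegrable_iff_integrableOn_Ioc_of_le zero_le_one).mp
      (intervalIntegral.intervalIntegrable_rpow' hs)).const_mul K
  calc ‖∫ t in Ioc (0:ℝ) 1, t ^ (s - 1) * f t‖ ≤ ∫ t in Ioc (0:ℝ) 1, K * t ^ s := by
        refine norm_integral_le_of_norm_le hint ((ae_restrict_iff' measurableSet_Ioc).mpr
          (Eventually.of_forall fun t ht => ?_))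
        have hpos := rpow_pos_of_pos ht.1 (s - 1)
        rw [norm_mul, norm_of_nonneg hpos.le, Real.norm_eq_abs]
        calc t ^ (s - 1) * |f t| ≤ t ^ (s - 1) * (K * t) := by gcongr; exact hf t ht
          _ = K * t ^ s := by rw [mul_left_comm, ← rpow_add_one ht.1.ne']; ring_nf
    _ = K / (s + 1) := by
        rw [← intervalIntegral.integral_of_le zero_le_one, intervalIntegral.integral_const_mul,
          integral_rpow (Or.inl hs)]
        simp [zero_rpow (by linarith : s + 1 ≠ 0)]
        ring

theorem isBigO_one_setIntegral_rpow_sub_one_mul {s₀ : ℝ} (hs₀ : -1 < s₀)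
    (hf : ∀ t ∈ Ioc (0:ℝ) 1, |f t| ≤ K * t) :
    (fun s => ∫ t in Ioc (0:ℝ) 1, t ^ (s - 1) * f t) =O[𝓝 s₀] fun _ => (1 : ℝ) := by
  have hlim : Tendsto (fun s => K / (s + 1)) (𝓝 s₀) (𝓝 (K / (s₀ + 1))) :=
    tendsto_const_nhds.div (tendsto_id.add_const 1) (by linarith)
  refine (IsBigO.of_bound 1 ?_).trans (hlim.isBigO_one ℝ)
  filter_upwards [lt_mem_nhds hs₀] with s hs
  rw [one_mul, Real.norm_eq_abs (K / (s + 1))]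
  exact (norm_setIntegral_rpow_sub_one_mul_le hs hf).trans (le_abs_self _)

end RpowIntegral

theorem stmt_4 (f : ℝ → ℝ) (hf : ContinuousOn f (Ioc 0 1))
    (C : ℝ) (hC : ∀ t ∈ Ioc (0:ℝ) 1, |f t * Real.log t / t| ≤ C) :
    HasDerivAt (fun s : ℝ => s / Real.Gamma s * ∫ t in Ioc (0:ℝ) 1, t ^ (s - 1) * f t)
      0 0 := by
  obtain ⟨K, hK⟩ := exists_abs_le_mul_of_abs_mul_log_div_le hf hC
  have hΓ : ContinuousAt (fun s : ℝ => (Gamma (s + 1))⁻¹) 0 :=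
    ((continuousAt_Gamma_of_pos one_pos).comp_of_eq (continuous_add_const 1).continuousAt
      (zero_add 1)).inv₀ (by simp)
  have hI := isBigO_one_setIntegral_rpow_sub_one_mul (by norm_num : (-1 : ℝ) < 0) hK
  have hbdd : (fun s : ℝ => (Gamma (s + 1))⁻¹ * ∫ t in Ioc (0:ℝ) 1, t ^ (s - 1) * f t)
      =O[𝓝 0] fun _ => (1 : ℝ) := by
    simpa only [mul_one] using (hΓ.tendsto.isBigO_one ℝ).mul hI
  simpa [div_Gamma_eq_sq_mul_inv_Gamma_add_one, mul_assoc] using hbdd.hasDerivAt_sq_smul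
end

section
/- Let f : ℝ → ℂ be continuous on [1, ∞) and suppose f(t) = O(t^{−α}) as t → ∞ for some α > 0. Then the function s ↦ (Γ(s))⁻¹ · ∫₁^∞ t^{s−1} f(t) dt (a real-variable function, defined for real s < α; the integral converges absolutely for such s) is differentiable at s = 0, with derivative equal to ∫₁^∞ t^{−1} f(t) dt. -/
/-!
Write `F` for `f` truncated to `(1, ∞)`. For real `s` the integral in question is the Mellin
transform `𝓜F(s)`, which converges and is holomorphic on the strip `-∞ < Re s < α` because `F`
vanishes near `0` and is `O(t^{-α})` at infinity. Since `1/Γ` is entire with a simple zero at `0`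
and derivative `1` there (`1/Γ(z) = z/Γ(z+1)`), the product rule gives
`(𝓜F/Γ)'(0) = 𝓜F(0) = ∫₁^∞ t⁻¹ f(t) dt`.
-/

open MeasureTheory Real Set Filter Topology Asymptotics

lemma hasDerivAt_inv_Gamma_zero : HasDerivAt (fun z : ℂ => (Complex.Gamma z)⁻¹) 1 0 := by
  have h_eq : ∀ z : ℂ, (Complex.Gamma z)⁻¹ = z * (Complex.Gamma (z + 1))⁻¹ := by
    intro z
    rcases eq_or_ne z 0 with rfl | hz
    · simp [Complex.Gamma_zero]
    · rw [Complex.Gamma_add_one z hz, mul_inv, ← mul_assoc, mul_inv_cancel₀ hz, one_mul]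
  have h_shift : DifferentiableAt ℂ (fun z : ℂ => (Complex.Gamma (z + 1))⁻¹) 0 :=
    (Complex.differentiable_one_div_Gamma.comp (differentiable_id.add_const 1)) 0
  have h_mul := (hasDerivAt_id (0 : ℂ)).mul h_shift.hasDerivAt
  simp only [id, zero_add, Complex.Gamma_one, inv_one, one_mul, zero_mul, add_zero] at h_mul
  exact h_mul.congr_of_eventuallyEq (Eventually.of_forall h_eq)

lemma hasDerivAt_inv_Gamma_mul_zero {g : ℂ → ℂ} (hg : DifferentiableAt ℂ g 0) :
    HasDerivAt (fun z : ℂ => (Complex.Gamma z)⁻¹ * g z) (g 0) 0 := by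
  simpa [Complex.Gamma_zero, Pi.mul_def] using hasDerivAt_inv_Gamma_zero.mul hg.hasDerivAt

lemma hasDerivAt_inv_Gamma_mul_ofReal_zero {g : ℂ → ℂ} (hg : DifferentiableAt ℂ g 0) :
    HasDerivAt (fun s : ℝ => ((Real.Gamma s : ℂ))⁻¹ * g s) (g 0) 0 := by
  simp_rw [← Complex.Gamma_ofReal]
  exact (hasDerivAt_inv_Gamma_mul_zero (by simpa using hg)).comp_ofReal

section Truncation

variable {E : Type*} [NormedAddCommGroup E] {a : ℝ}

lemma ContinuousOn.locallyIntegrable_indicator_Ioi {f : ℝ → E} (hf : ContinuousOn f (Ici a)) :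
    LocallyIntegrable ((Ioi a).indicator f) := by
  refine locallyIntegrable_iff.2 fun K hK => ?_
  obtain ⟨R, hR⟩ := hK.isBounded.bddAbove
  rw [integrableOn_indicator_iff measurableSet_Ioi]
  exact (hf.mono Icc_subset_Ici_self).integrableOn_Icc.mono_set
    fun x hx => ⟨hx.1.le, hR hx.2⟩

lemma indicator_Ioi_eventuallyEq_zero_nhds {b : ℝ} (hb : b < a) (f : ℝ → E) :
    (Ioi a).indicator f =ᶠ[𝓝 b] 0 := by
  filter_upwards [eventually_lt_nhds hb] with t ht
  exact indicator_of_notMem (not_lt.2 ht.le) f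

lemma indicator_Ioi_eventuallyEq_atTop (f : ℝ → E) : (Ioi a).indicator f =ᶠ[atTop] f := by
  filter_upwards [eventually_gt_atTop a] with t ht
  exact indicator_of_mem ht f

end Truncation

section MellinTruncation

variable {a : ℝ}

lemma cpow_smul_indicator_Ioi (ha : 0 ≤ a) (f : ℝ → ℂ) (s t : ℝ) :
    (t : ℂ) ^ ((s : ℂ) - 1) • (Ioi a).indicator f t =
      (Ioi a).indicator (fun t => ((t ^ (s - 1) : ℝ) : ℂ) * f t) t := by
  by_cases ht : t ∈ Ioi a
  · rw [indicator_of_mem ht, indicator_of_mem ht, smul_eq_mul,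
      Complex.ofReal_cpow (ha.trans ht.le), Complex.ofReal_sub, Complex.ofReal_one]
  · rw [indicator_of_notMem ht, indicator_of_notMem ht, smul_zero]

lemma mellinConvergent_indicator_Ioi_iff (ha : 0 ≤ a) (f : ℝ → ℂ) (s : ℝ) :
    MellinConvergent ((Ioi a).indicator f) s ↔
      IntegrableOn (fun t => ((t ^ (s - 1) : ℝ) : ℂ) * f t) (Ioi a) := by
  simp_rw [MellinConvergent, cpow_smul_indicator_Ioi ha,
    integrableOn_indicator_iff measurableSet_Ioi, Ioi_inter_Ioi, max_eq_left ha]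

lemma mellin_indicator_Ioi (ha : 0 ≤ a) (f : ℝ → ℂ) (s : ℝ) :
    mellin ((Ioi a).indicator f) s = ∫ t in Ioi a, ((t ^ (s - 1) : ℝ) : ℂ) * f t := by
  simp_rw [mellin, cpow_smul_indicator_Ioi ha, setIntegral_indicator measurableSet_Ioi,
    Ioi_inter_Ioi, max_eq_right ha]

end MellinTruncation

theorem stmt_5 (f : ℝ → ℂ) (hf : ContinuousOn f (Ici 1))
    (α : ℝ) (hα : 0 < α) (hO : f =O[atTop] fun t : ℝ => t ^ (-α)) :
    (∀ s : ℝ, s < α →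
      IntegrableOn (fun t : ℝ => ((t ^ (s - 1) : ℝ) : ℂ) * f t) (Ioi 1) volume) ∧
    HasDerivAt (fun s : ℝ =>
        ((Real.Gamma s : ℂ))⁻¹ * ∫ t in Ioi (1:ℝ), ((t ^ (s - 1) : ℝ) : ℂ) * f t)
      (∫ t in Ioi (1:ℝ), ((t : ℂ))⁻¹ * f t) 0 := by
  set F := (Ioi (1 : ℝ)).indicator f
  have hF_loc : LocallyIntegrableOn F (Ioi 0) :=
    hf.locallyIntegrable_indicator_Ioi.locallyIntegrableOn _
  have hF_top : F =O[atTop] fun t : ℝ => t ^ (-α) :=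
    (indicator_Ioi_eventuallyEq_atTop f).trans_isBigO hO
  have hF_bot (b : ℝ) : F =O[𝓝[>] 0] fun t : ℝ => t ^ (-b) :=
    ((indicator_Ioi_eventuallyEq_zero_nhds zero_lt_one f).filter_mono
      nhdsWithin_le_nhds).trans_isBigO (isBigO_zero _ _)
  refine ⟨fun s hs => ?_, ?_⟩
  · rw [← mellinConvergent_indicator_Ioi_iff zero_le_one]
    exact mellinConvergent_of_isBigO_rpow hF_loc hF_top (by simpa using hs) (hF_bot (s - 2))
      (by simp)
  · have hM := mellin_differentiableAt_of_isBigO_rpow (s := 0) hF_loc hF_top (by simpa using hα)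
      (hF_bot (-1)) (by simp)
    have hD := hasDerivAt_inv_Gamma_mul_ofReal_zero hM
    simp_rw [F, mellin_indicator_Ioi zero_le_one] at hD
    convert hD using 1
    rw [← Complex.ofReal_zero, mellin_indicator_Ioi zero_le_one, zero_sub]
    simp_rw [Real.rpow_neg_one, Complex.ofReal_inv]
end

section
/- Let r ∈ ℝ with r ∉ ℤ, let n ∈ ℕ with n + 1 > r, let a₀, …, a_n ∈ ℂ, and let h : (0, 1] → ℂ be continuous with h(t) − Σ_{j=0}^n a_j · t^{j−r} = O(t^{n+1−r}) as t → 0⁺. Define, for real s, G(s) := Σ_{j=0}^n a_j · (s + j − r)⁻¹ · (Γ(s))⁻¹ + (Γ(s))⁻¹ · ∫₀¹ t^{s−1} · (h(t) − Σ_{j=0}^n a_j t^{j−r}) dt. Then: (i) for every real s > max(r, 0), the integral ∫₀¹ t^{s−1} h(t) dt converges and G(s) = (Γ(s))⁻¹ · ∫₀¹ t^{s−1} h(t) dt; and (ii) G is differentiable at s = 0 (in particular, the remainder integral in G(s) converges for all real s > r − n − 1). -/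
/-!
Write `h = P + R` with `P t = ∑ aⱼ t^(j-r)` and `R = O(t^(n+1-r))` at `0⁺`, and view all integrals
over `(0, 1]` as Mellin transforms of functions extended by zero beyond `1`. For `s > r` the
transform of `P` is `∑ aⱼ / (s + j - r)`, which gives (i). The transform of `R` converges and is
holomorphic for `Re s > r - n - 1 < 0` by the standard `O`-estimates for Mellin transforms, so near
`s = 0` the function `G` is built from it, the entire function `1/Γ` and the terms
`aⱼ / (s + j - r)`, which are regular at `0` because `r ∉ ℤ`.
-/

open MeasureTheory Real Set Filter

open scoped Topology

section IndicatorIoc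

variable {F : ℝ → ℂ}

lemma cpow_smul_indicator_Ioc (s : ℝ) :
    (fun t : ℝ => (t : ℂ) ^ ((s : ℂ) - 1) • (Ioc 0 1).indicator F t) =
      (Ioc 0 1).indicator fun t => ((t ^ (s - 1) : ℝ) : ℂ) * F t := by
  ext t
  by_cases ht : t ∈ Ioc (0 : ℝ) 1
  · simp only [indicator_of_mem ht, smul_eq_mul, Complex.ofReal_cpow ht.1.le]
    push_cast
    rfl
  · simp [indicator_of_notMem ht]

lemma mellinConvergent_indicator_Ioc_iff (s : ℝ) :
    MellinConvergent ((Ioc 0 1).indicator F) s ↔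
      IntegrableOn (fun t : ℝ => ((t ^ (s - 1) : ℝ) : ℂ) * F t) (Ioc 0 1) := by
  rw [MellinConvergent, cpow_smul_indicator_Ioc, integrableOn_indicator_iff measurableSet_Ioc,
    inter_eq_self_of_subset_left Ioc_subset_Ioi_self]

lemma mellin_indicator_Ioc (s : ℝ) :
    mellin ((Ioc 0 1).indicator F) s =
      ∫ t in Ioc (0 : ℝ) 1, ((t ^ (s - 1) : ℝ) : ℂ) * F t := by
  rw [mellin, cpow_smul_indicator_Ioc, setIntegral_indicator measurableSet_Ioc,
    inter_eq_self_of_subset_right Ioc_subset_Ioi_self]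

lemma hasMellin_indicator_Ioc_iff (s : ℝ) (m : ℂ) :
    HasMellin ((Ioc 0 1).indicator F) s m ↔
      IntegrableOn (fun t : ℝ => ((t ^ (s - 1) : ℝ) : ℂ) * F t) (Ioc 0 1) ∧
        ∫ t in Ioc (0 : ℝ) 1, ((t ^ (s - 1) : ℝ) : ℂ) * F t = m := by
  rw [HasMellin, mellinConvergent_indicator_Ioc_iff, mellin_indicator_Ioc]

lemma hasMellin_indicator_Ioc_rpow {p s : ℝ} (hps : 0 < s + p) :
    HasMellin ((Ioc 0 1).indicator fun t => ((t ^ p : ℝ) : ℂ)) s (((s + p)⁻¹ : ℝ) : ℂ) := by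
  have hcpow := hasMellin_cpow_Ioc (p : ℂ) (s := s) (by simpa using hps)
  have hfun : ((Ioc 0 1).indicator fun t => ((t ^ p : ℝ) : ℂ)) =
      (Ioc 0 1).indicator fun t : ℝ => (t : ℂ) ^ (p : ℂ) :=
    indicator_congr fun t ht => Complex.ofReal_cpow ht.1.le p
  rw [hfun]
  push_cast
  simpa only [one_div] using hcpow

lemma locallyIntegrableOn_indicator_Ioc (hF : ContinuousOn F (Ioc 0 1)) :
    LocallyIntegrableOn ((Ioc 0 1).indicator F) (Ioi 0) := by
  rw [locallyIntegrableOn_iff isOpen_Ioi.isLocallyClosed]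
  intro k hk hkc
  rw [integrableOn_indicator_iff measurableSet_Ioc]
  have hsub : Ioc 0 1 ∩ k ⊆ k ∩ Icc 0 1 := fun t ht => ⟨ht.2, Ioc_subset_Icc_self ht.1⟩
  refine IntegrableOn.mono_set ?_ hsub
  exact (hF.mono fun t ht => ⟨hk ht.1, ht.2.2⟩).integrableOn_compact (hkc.inter_right isClosed_Icc)

lemma isBigO_atTop_indicator_Ioc {α : Type*} [Norm α] (g : ℝ → α) :
    (Ioc 0 1).indicator F =O[atTop] g := by
  refine (Asymptotics.isBigO_zero g atTop).congr' ?_ EventuallyEq.rfl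
  filter_upwards [eventually_gt_atTop 1] with t ht
  exact (indicator_of_notMem (fun hmem => hmem.2.not_gt ht) F).symm

lemma indicator_Ioc_eventuallyEq_nhdsGT_zero : (Ioc 0 1).indicator F =ᶠ[𝓝[>] 0] F := by
  filter_upwards [Ioo_mem_nhdsGT (zero_lt_one' ℝ)] with t ht
  exact indicator_of_mem (Ioo_subset_Ioc_self ht) F

variable {b : ℝ} (hF : ContinuousOn F (Ioc 0 1)) (hFb : F =O[𝓝[>] 0] (· ^ b))
include hF hFb

lemma mellinConvergent_indicator_Ioc_of_isBigO {s : ℂ} (hs : -b < s.re) :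
    MellinConvergent ((Ioc 0 1).indicator F) s :=
  mellinConvergent_of_isBigO_rpow (a := s.re + 1) (b := -b) (locallyIntegrableOn_indicator_Ioc hF)
    (isBigO_atTop_indicator_Ioc _) (lt_add_one _)
    (by simpa only [neg_neg] using indicator_Ioc_eventuallyEq_nhdsGT_zero.trans_isBigO hFb) hs

lemma differentiableAt_mellin_indicator_Ioc_of_isBigO {s : ℂ} (hs : -b < s.re) :
    DifferentiableAt ℂ (mellin ((Ioc 0 1).indicator F)) s :=
  mellin_differentiableAt_of_isBigO_rpow (a := s.re + 1) (b := -b)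
    (locallyIntegrableOn_indicator_Ioc hF) (isBigO_atTop_indicator_Ioc _) (lt_add_one _)
    (by simpa only [neg_neg] using indicator_Ioc_eventuallyEq_nhdsGT_zero.trans_isBigO hFb) hs

end IndicatorIoc

lemma hasMellin_indicator_Ioc_of_sub_sum {h : ℝ → ℂ} {s : ℝ} (N : Finset ℕ) (a : ℕ → ℂ)
    (p : ℕ → ℝ) (hp : ∀ j ∈ N, 0 < s + p j)
    (hR : MellinConvergent
      ((Ioc 0 1).indicator fun t => h t - ∑ j ∈ N, a j * ((t ^ p j : ℝ) : ℂ)) s) :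
    HasMellin ((Ioc 0 1).indicator h) s
      (∑ j ∈ N, a j * (((s + p j)⁻¹ : ℝ) : ℂ) +
        mellin ((Ioc 0 1).indicator fun t => h t - ∑ j ∈ N, a j * ((t ^ p j : ℝ) : ℂ)) s) := by
  have hmono j (hj : j ∈ N) := (hasMellin_indicator_Ioc_iff s _).1
    (hasMellin_indicator_Ioc_rpow (hp j hj))
  rw [mellinConvergent_indicator_Ioc_iff] at hR
  have hsplit : (fun t : ℝ => ((t ^ (s - 1) : ℝ) : ℂ) * h t) =
      fun t => ∑ j ∈ N, a j * (((t ^ (s - 1) : ℝ) : ℂ) * ((t ^ p j : ℝ) : ℂ)) +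
        ((t ^ (s - 1) : ℝ) : ℂ) * (h t - ∑ j ∈ N, a j * ((t ^ p j : ℝ) : ℂ)) := by
    ext t
    rw [mul_sub, Finset.mul_sum]
    simp only [mul_left_comm]
    ring
  have hsum : IntegrableOn (fun t : ℝ => ∑ j ∈ N,
      a j * (((t ^ (s - 1) : ℝ) : ℂ) * ((t ^ p j : ℝ) : ℂ))) (Ioc 0 1) :=
    integrable_finsetSum _ fun j hj => (hmono j hj).1.const_mul (a j)
  rw [hasMellin_indicator_Ioc_iff, mellin_indicator_Ioc, hsplit]
  refine ⟨hsum.add hR, ?_⟩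
  rw [integral_add hsum hR, integral_finsetSum _ fun j hj => (hmono j hj).1.const_mul (a j)]
  congr 1
  exact Finset.sum_congr rfl fun j hj => by rw [integral_const_mul, (hmono j hj).2]

lemma differentiableAt_inv_ofReal_Gamma (s : ℝ) :
    DifferentiableAt ℝ (fun s : ℝ => ((Real.Gamma s : ℂ))⁻¹) s := by
  simp only [← Complex.Gamma_ofReal]
  exact (Complex.differentiable_one_div_Gamma _).hasDerivAt.comp_ofReal.differentiableAt

lemma differentiableAt_sum_mul_inv_Gamma_add_inv_Gamma_mul_mellin {F : ℝ → ℂ} (N : Finset ℕ)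
    (a : ℕ → ℂ) (p : ℕ → ℝ) {s₀ : ℝ} (hp : ∀ j ∈ N, s₀ + p j ≠ 0)
    (hF : DifferentiableAt ℂ (mellin F) s₀) :
    DifferentiableAt ℝ (fun s : ℝ => ∑ j ∈ N, a j * (((s + p j)⁻¹ : ℝ) : ℂ) *
      ((Real.Gamma s : ℂ))⁻¹ + ((Real.Gamma s : ℂ))⁻¹ * mellin F s) s₀ := by
  refine .add (.fun_sum fun j hj => .mul ?_ (differentiableAt_inv_ofReal_Gamma s₀))
    ((differentiableAt_inv_ofReal_Gamma s₀).mul hF.hasDerivAt.comp_ofReal.differentiableAt)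
  exact (differentiableAt_const _).mul <| Complex.ofRealCLM.differentiableAt.comp s₀ <|
    (differentiableAt_id.add_const _).inv (hp j hj)

theorem stmt_6 (r : ℝ) (hr : ∀ m : ℤ, r ≠ (m : ℝ)) (n : ℕ) (hn : r < (n : ℝ) + 1)
    (a : ℕ → ℂ) (h : ℝ → ℂ) (hcont : ContinuousOn h (Ioc 0 1))
    (hO : (fun t : ℝ => h t - ∑ j ∈ Finset.range (n + 1),
          a j * ((t ^ ((j : ℝ) - r) : ℝ) : ℂ))
        =O[nhdsWithin 0 (Ioi 0)] fun t : ℝ => (t ^ ((n : ℝ) + 1 - r) : ℝ))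
    (G : ℝ → ℂ)
    (hG : ∀ s : ℝ, G s =
        (∑ j ∈ Finset.range (n + 1),
          a j * (((s + (j : ℝ) - r)⁻¹ : ℝ) : ℂ) * ((Real.Gamma s : ℂ))⁻¹)
        + ((Real.Gamma s : ℂ))⁻¹ * ∫ t in Ioc (0:ℝ) 1, ((t ^ (s - 1) : ℝ) : ℂ) *
            (h t - ∑ j ∈ Finset.range (n + 1), a j * ((t ^ ((j : ℝ) - r) : ℝ) : ℂ))) :
    (∀ s : ℝ, max r 0 < s →
      IntegrableOn (fun t : ℝ => ((t ^ (s - 1) : ℝ) : ℂ) * h t) (Ioc 0 1) volume ∧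
      G s = ((Real.Gamma s : ℂ))⁻¹ * ∫ t in Ioc (0:ℝ) 1, ((t ^ (s - 1) : ℝ) : ℂ) * h t) ∧
    (∀ s : ℝ, r - (n : ℝ) - 1 < s →
      IntegrableOn (fun t : ℝ => ((t ^ (s - 1) : ℝ) : ℂ) *
          (h t - ∑ j ∈ Finset.range (n + 1), a j * ((t ^ ((j : ℝ) - r) : ℝ) : ℂ)))
        (Ioc 0 1) volume) ∧
    DifferentiableAt ℝ G 0 := by
  set R : ℝ → ℂ := fun t =>
    h t - ∑ j ∈ Finset.range (n + 1), a j * ((t ^ ((j : ℝ) - r) : ℝ) : ℂ)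
  have hRcont : ContinuousOn R (Ioc 0 1) :=
    hcont.sub <| continuousOn_finsetSum _ fun j _ => continuousOn_const.mul <|
      Complex.continuous_ofReal.comp_continuousOn <|
        continuousOn_id.rpow_const fun t ht => Or.inl ht.1.ne'
  have hRconv {s : ℂ} (hs : r - n - 1 < s.re) :
      MellinConvergent ((Ioc 0 1).indicator R) s :=
    mellinConvergent_indicator_Ioc_of_isBigO hRcont hO (by linarith)
  have hGeq : G = fun s : ℝ => ∑ j ∈ Finset.range (n + 1),
      a j * (((s + ((j : ℝ) - r))⁻¹ : ℝ) : ℂ) * ((Real.Gamma s : ℂ))⁻¹ +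
        ((Real.Gamma s : ℂ))⁻¹ * mellin ((Ioc 0 1).indicator R) s := by
    ext s
    rw [hG, mellin_indicator_Ioc]
    simp only [add_sub_assoc]
    rfl
  refine ⟨fun s hs => ?_, fun s hs => (mellinConvergent_indicator_Ioc_iff s).1 (hRconv ?_), ?_⟩
  · rw [max_lt_iff] at hs
    obtain ⟨hint, heq⟩ := (hasMellin_indicator_Ioc_iff _ _).1 <|
      hasMellin_indicator_Ioc_of_sub_sum _ a (fun j => (j : ℝ) - r)
        (fun j _ => by linarith [j.cast_nonneg (α := ℝ)])
        (hRconv (by rw [Complex.ofReal_re]; linarith))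
    refine ⟨hint, ?_⟩
    rw [heq, hGeq, mul_add, Finset.mul_sum]
    exact congrArg₂ (· + ·) (Finset.sum_congr rfl fun j _ => by ring) rfl
  · simpa using hs
  · rw [hGeq]
    refine differentiableAt_sum_mul_inv_Gamma_add_inv_Gamma_mul_mellin _ a _ (fun j _ => ?_) <|
      differentiableAt_mellin_indicator_Ioc_of_isBigO hRcont hO
        (by rw [Complex.ofReal_re]; linarith)
    rw [zero_add, sub_ne_zero]
    exact_mod_cast (hr j).symm
end

section
/- Let R > 0 and let s be a real number with s > 1/2. Then (1/Γ(s)) · ∫₀^∞ t^{s−1} · ( Σ_{n ∈ ℤ, n ≠ 0} exp(−t·(2πn/R)²) ) dt = 2 · (R/(2π))^{2s} · ζ(2s), where ζ is the Riemann zeta function; in particular the sum converges for every t > 0 and the integral converges. -/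
/-!
Each term `exp (-t * p)` of the series has Mellin transform `Γ(s) p ^ (-s)`. For the
frequencies `p_n = (2πn/R)²` these values are `(R/2π)^{2s} |n|^{-2s}`, summable since `2s > 1`;
as all terms are nonnegative, sum and integral can be exchanged, and summing `|n|^{-2s}` over
`n` and `-n` gives `2 ζ(2s)`.
-/

open MeasureTheory Real Set

lemma summable_int_exp_neg_mul_sq {a : ℝ} (ha : 0 < a) :
    Summable fun n : ℤ => rexp (-a * (n : ℝ) ^ 2) := by
  have hnat : Summable fun n : ℕ => rexp (-a * (n : ℝ) ^ 2) :=
    summable_exp_nat_mul_of_ge (neg_neg_of_pos ha) fun n => by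
      exact_mod_cast Nat.le_self_pow two_ne_zero n
  exact .of_nat_of_neg (by simpa using hnat) (by simpa using hnat)

lemma integral_rpow_sub_one_mul_exp_neg_mul {s p : ℝ} (hs : 0 < s) (hp : 0 < p) :
    ∫ t in Ioi (0 : ℝ), t ^ (s - 1) * rexp (-t * p) = Gamma s * p ^ (-s) := by
  simp_rw [neg_mul, mul_comm _ p, integral_rpow_mul_exp_neg_mul_Ioi hs hp, one_div,
    inv_rpow hp.le, rpow_neg hp.le, mul_comm]

lemma integrableOn_rpow_sub_one_mul_exp_neg_mul {s p : ℝ} (hs : 0 < s) (hp : 0 < p) :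
    IntegrableOn (fun t => t ^ (s - 1) * rexp (-t * p)) (Ioi 0) :=
  -- the Bochner integral of a non-integrable function is `0`
  .of_integral_ne_zero <| by
    rw [integral_rpow_sub_one_mul_exp_neg_mul hs hp]
    exact (mul_pos (Gamma_pos_of_pos hs) (rpow_pos_of_pos hp _)).ne'

section MellinOfExponentialSeries

variable {ι : Type*} [Countable ι] {p : ι → ℝ} {s : ℝ}

theorem integral_rpow_sub_one_mul_tsum_exp_neg_mul (hp : ∀ i, 0 < p i) (hs : 0 < s)
    (hsum : Summable fun i => p i ^ (-s)) :
    ∫ t in Ioi (0 : ℝ), t ^ (s - 1) * ∑' i, rexp (-t * p i) = Gamma s * ∑' i, p i ^ (-s) := by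
  have hint i := integrableOn_rpow_sub_one_mul_exp_neg_mul hs (hp i)
  have hval i := integral_rpow_sub_one_mul_exp_neg_mul hs (hp i)
  simp_rw [← tsum_mul_left]
  rw [← integral_tsum_of_summable_integral_norm hint]
  · simp_rw [hval]
  · refine (hsum.mul_left (Gamma s)).congr fun i => ?_
    rw [← hval]
    refine setIntegral_congr_fun measurableSet_Ioi fun t ht => ?_
    exact (norm_of_nonneg (by have := rpow_nonneg (le_of_lt ht) (s - 1); positivity)).symm

theorem integrableOn_rpow_sub_one_mul_tsum_exp_neg_mul [Nonempty ι] (hp : ∀ i, 0 < p i)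
    (hs : 0 < s) (hsum : Summable fun i => p i ^ (-s)) :
    IntegrableOn (fun t => t ^ (s - 1) * ∑' i, rexp (-t * p i)) (Ioi 0) :=
  .of_integral_ne_zero <| by
    rw [integral_rpow_sub_one_mul_tsum_exp_neg_mul hp hs hsum]
    have := hsum.tsum_pos (fun i => (rpow_pos_of_pos (hp i) _).le) (Classical.arbitrary ι)
      (rpow_pos_of_pos (hp _) _)
    exact (mul_pos (Gamma_pos_of_pos hs) this).ne'

end MellinOfExponentialSeries

lemma tsum_ne_zero_int_abs_rpow_neg {b : ℝ} (hb : 1 < b) :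
    ∑' n : {n : ℤ // n ≠ 0}, |((n : ℤ) : ℝ)| ^ (-b) = 2 * ∑' n : ℕ, (n : ℝ) ^ (-b) := by
  have hzero : |((0 : ℤ) : ℝ)| ^ (-b) = 0 := by simp [zero_rpow (by linarith : -b ≠ 0)]
  refine (tsum_subtype_eq_of_support_subset (f := fun n : ℤ => |(n : ℝ)| ^ (-b))
    (s := {n | n ≠ 0}) fun n hn h0 => hn ?_).trans ?_
  · exact h0 ▸ hzero
  have hsplit := tsum_nat_add_neg (summable_abs_int_rpow hb)
  rw [hzero, add_zero] at hsplit
  rw [← hsplit]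
  simp [← two_mul, tsum_mul_left]

lemma ofReal_tsum_nat_rpow_neg_eq_riemannZeta {b : ℝ} (hb : 1 < b) :
    ((∑' n : ℕ, (n : ℝ) ^ (-b) : ℝ) : ℂ) = riemannZeta b := by
  rw [zeta_eq_tsum_one_div_nat_cpow (by rwa [Complex.ofReal_re]), Complex.ofReal_tsum]
  refine tsum_congr fun n => ?_
  rw [rpow_neg n.cast_nonneg, Complex.ofReal_inv, Complex.ofReal_cpow n.cast_nonneg, one_div]
  norm_num

lemma sq_div_rpow_neg {a : ℝ} (ha : 0 < a) (x s : ℝ) :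
    ((x / a) ^ 2) ^ (-s) = a ^ (2 * s) * |x| ^ (-(2 * s)) := by
  rw [← sq_abs, ← rpow_natCast, ← rpow_mul (abs_nonneg _), abs_div, abs_of_pos ha,
    div_rpow (abs_nonneg _) ha.le]
  push_cast
  rw [mul_neg, rpow_neg ha.le, div_inv_eq_mul, mul_comm]

theorem stmt_7 (R : ℝ) (hR : 0 < R) (s : ℝ) (hs : 1/2 < s) :
    (∀ t : ℝ, 0 < t →
      Summable fun n : {n : ℤ // n ≠ 0} =>
        Real.exp (-t * (2 * π * ((n : ℤ) : ℝ) / R) ^ 2)) ∧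
    IntegrableOn (fun t : ℝ => t ^ (s - 1) *
      ∑' n : {n : ℤ // n ≠ 0}, Real.exp (-t * (2 * π * ((n : ℤ) : ℝ) / R) ^ 2))
      (Ioi 0) volume ∧
    ((1 / Real.Gamma s * ∫ t in Ioi (0:ℝ), t ^ (s - 1) *
        ∑' n : {n : ℤ // n ≠ 0}, Real.exp (-t * (2 * π * ((n : ℤ) : ℝ) / R) ^ 2) : ℝ) : ℂ)
      = 2 * (((R / (2 * π)) ^ (2 * s) : ℝ) : ℂ) * riemannZeta ((2 * s : ℝ) : ℂ) := by
  have h2s : 1 < 2 * s := by linarith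
  have hs0 : 0 < s := by linarith
  have hR' : 0 < R / (2 * π) := by positivity
  have hfreq (n : ℤ) : 2 * π * (n : ℝ) / R = n / (R / (2 * π)) := by field_simp
  have hp (n : {n : ℤ // n ≠ 0}) : 0 < (2 * π * ((n : ℤ) : ℝ) / R) ^ 2 := by
    have := Int.cast_ne_zero (α := ℝ) |>.mpr n.2
    positivity
  have hpow (n : {n : ℤ // n ≠ 0}) : ((2 * π * ((n : ℤ) : ℝ) / R) ^ 2) ^ (-s) =
      (R / (2 * π)) ^ (2 * s) * |((n : ℤ) : ℝ)| ^ (-(2 * s)) := by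
    rw [hfreq, sq_div_rpow_neg hR']
  have hsum : Summable fun n : {n : ℤ // n ≠ 0} => ((2 * π * ((n : ℤ) : ℝ) / R) ^ 2) ^ (-s) := by
    simp_rw [hpow]
    exact ((summable_abs_int_rpow h2s).subtype _).mul_left _
  have : Nonempty {n : ℤ // n ≠ 0} := ⟨⟨1, one_ne_zero⟩⟩
  refine ⟨fun t ht => ?_, integrableOn_rpow_sub_one_mul_tsum_exp_neg_mul hp hs0 hsum, ?_⟩
  · refine ((summable_int_exp_neg_mul_sq (by positivity : 0 < t * (2 * π / R) ^ 2)).subtype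
      _).congr fun n => ?_
    simp only [Function.comp_apply]
    ring_nf
  rw [integral_rpow_sub_one_mul_tsum_exp_neg_mul hp hs0 hsum, tsum_congr hpow, tsum_mul_left,
    tsum_ne_zero_int_abs_rpow_neg h2s, one_div, inv_mul_cancel_left₀ (Gamma_pos_of_pos hs0).ne',
    Complex.ofReal_mul, Complex.ofReal_mul, Complex.ofReal_ofNat,
    ofReal_tsum_nat_rpow_neg_eq_riemannZeta h2s]
  ring
end

section
/- Let R > 0, let g ∈ ℝ with g ≠ 0, and let θ ∈ ℝ. Define 𝒯 : (0, ∞) → ℂ by 𝒯(t) = −(R/(2·√(π·t))) · exp(−R²g²/(4t)) · exp(−i·θ·g). Then the sum of the derivative at s = 0 of the real-variable function s ↦ (Γ(s))⁻¹ · ∫₀¹ t^{s−1} 𝒯(t) dt and the integral ∫₁^∞ t^{−1} 𝒯(t) dt equals −exp(−i·θ·g)/|g|. (Equivalently, the equivariant analytic torsion T_g of the flat connection d + iθ dx on the trivial line bundle over the real line with metric R²·dx², for the translation action of ℝ and the nonzero group element g, equals exp(exp(−iθg)/(2|g|)).) -/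
/-!
Up to the constant `-R e^{-iθg}`, `𝒯` is the heat kernel of the real line at distance `R g`.
Since `1/Γ(s) = s/Γ(s+1)` has a simple zero at `s = 0`, the derivative at `0` of
`(1/Γ(s)) ∫₀¹ t^{s-1} 𝒯(t) dt` is the value of the Mellin integral at `s = 0`, as soon as that
integral is continuous there. The sum is therefore `∫₀^∞ t⁻¹ 𝒯(t) dt`, which the substitution
`t ↦ 1/t` turns into the Gamma integral `∫₀^∞ t^{-3/2} e^{-b/t} dt = Γ(1/2) b^{-1/2}`, `b = (R g)²/4`.
-/

open MeasureTheory Real Set Filter Topology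

lemma integral_rpow_mul_exp_neg_div_Ioi {s b : ℝ} (hs : 0 < s) (hb : 0 < b) :
    ∫ t in Ioi (0:ℝ), t ^ (-s - 1) * exp (-(b / t)) = b ^ (-s) * Gamma s := by
  rw [rpow_neg hb.le, ← inv_rpow hb.le, ← one_div, ← integral_rpow_mul_exp_neg_mul_Ioi hs hb,
    ← integral_comp_rpow_Ioi _ (by norm_num : (-1:ℝ) ≠ 0)]
  refine setIntegral_congr_fun measurableSet_Ioi fun t (ht : 0 < t) => ?_
  rw [smul_eq_mul, rpow_neg_one, inv_rpow ht.le, ← rpow_neg ht.le, div_inv_eq_mul, abs_neg,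
    abs_one, one_mul, ← mul_assoc, ← rpow_add ht]
  ring_nf

-- A nonzero integral forces integrability, since non-integrable functions have integral `0`.
lemma integrableOn_rpow_mul_exp_neg_div_Ioi {s b : ℝ} (hs : 0 < s) (hb : 0 < b) :
    IntegrableOn (fun t : ℝ => t ^ (-s - 1) * exp (-(b / t))) (Ioi 0) :=
  .of_integral_ne_zero <| by rw [integral_rpow_mul_exp_neg_div_Ioi hs hb]; positivity

noncomputable def heatKernel (x t : ℝ) : ℝ := exp (-x ^ 2 / (4 * t)) / √(4 * π * t)

lemma rpow_mul_heatKernel {x t : ℝ} (a : ℝ) (ht : 0 < t) :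
    t ^ a * heatKernel x t = (2 * √π)⁻¹ * (t ^ (-(-a - 1/2) - 1) * exp (-(x ^ 2 / 4 / t))) := by
  have hsqrt : √(4 * π * t) = 2 * √π * t ^ (1/2 : ℝ) := by
    rw [sqrt_mul (by positivity), sqrt_mul (by norm_num), sqrt_eq_rpow t,
      show (4:ℝ) = 2 ^ 2 by norm_num, sqrt_sq (by norm_num)]
  rw [heatKernel, hsqrt, show -(-a - 1/2) - 1 = a + -(1/2) by ring, rpow_add ht, rpow_neg ht.le]
  field_simp

lemma heatKernel_mul_smul_eq (R g t : ℝ) (c : ℂ) :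
    heatKernel (R * g) t • (-(R : ℂ) * c) =
      -((R / (2 * √(π * t)) : ℝ) : ℂ) * Complex.exp ((-(R ^ 2 * g ^ 2) / (4 * t) : ℝ) : ℂ) * c := by
  have hsqrt : √(4 * π * t) = 2 * √(π * t) := by
    rw [mul_assoc, sqrt_mul (by norm_num), show (4:ℝ) = 2 ^ 2 by norm_num, sqrt_sq (by norm_num)]
  rw [heatKernel, hsqrt, mul_pow, Complex.real_smul]
  push_cast [Complex.ofReal_exp]
  ring

lemma integrableOn_rpow_mul_heatKernel {x a : ℝ} (hx : x ≠ 0) (ha : a < -1/2) :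
    IntegrableOn (fun t => t ^ a * heatKernel x t) (Ioi 0) := by
  refine IntegrableOn.congr_fun ?_ (fun t ht => (rpow_mul_heatKernel a ht).symm) measurableSet_Ioi
  exact (integrableOn_rpow_mul_exp_neg_div_Ioi (by linarith) (by positivity)).const_mul _

lemma integral_rpow_neg_one_mul_heatKernel {x : ℝ} (hx : x ≠ 0) :
    ∫ t in Ioi (0:ℝ), t ^ (-1:ℝ) * heatKernel x t = |x|⁻¹ := by
  rw [setIntegral_congr_fun measurableSet_Ioi fun t ht => rpow_mul_heatKernel (-1) ht,
    integral_const_mul, show -(-1:ℝ) - 1/2 = 1/2 by norm_num,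
    integral_rpow_mul_exp_neg_div_Ioi one_half_pos (by positivity), Gamma_one_half_eq,
    rpow_neg (by positivity), ← sqrt_eq_rpow, sqrt_div (sq_nonneg x), sqrt_sq_eq_abs,
    show (4:ℝ) = 2 ^ 2 by norm_num, sqrt_sq (by norm_num)]
  have : √π ≠ 0 := (sqrt_pos.2 pi_pos).ne'
  field_simp

section
variable {E : Type*} [NormedAddCommGroup E] [NormedSpace ℝ E]

lemma hasDerivAt_smul_zero_of_continuousAt {h : ℝ → E} (hh : ContinuousAt h 0) :
    HasDerivAt (fun s : ℝ => s • h s) (h 0) 0 := by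
  rw [hasDerivAt_iff_tendsto_slope]
  refine (hh.tendsto.mono_left nhdsWithin_le_nhds).congr' ?_
  filter_upwards [self_mem_nhdsWithin] with s (hs : s ≠ 0)
  rw [slope_def_module, zero_smul, sub_zero, sub_zero, smul_smul, inv_mul_cancel₀ hs, one_smul]

lemma hasDerivAt_inv_Gamma_smul_zero {F : ℝ → E} (hF : ContinuousAt F 0) :
    HasDerivAt (fun s : ℝ => (Gamma s)⁻¹ • F s) (F 0) 0 := by
  have hGamma : ContinuousAt (fun s : ℝ => Gamma (s + 1)) 0 :=
    (differentiableAt_Gamma fun m => by linarith [m.cast_nonneg (α := ℝ)]).continuousAt.comp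
      (continuous_add_const 1).continuousAt
  have key : HasDerivAt (fun s : ℝ => s • ((Gamma (s + 1))⁻¹ • F s)) (F 0) 0 := by
    simpa using hasDerivAt_smul_zero_of_continuousAt ((hGamma.inv₀ (by simp)).smul hF)
  refine key.congr_of_eventuallyEq (Eventually.of_forall fun s => ?_)
  rcases eq_or_ne s 0 with rfl | hs
  · simp
  · simp only [smul_smul, Gamma_add_one hs, mul_inv, ← mul_assoc, mul_inv_cancel₀ hs, one_mul]

lemma continuousAt_integral_rpow_smul_Ioc {f : ℝ → E} {s₀ ε : ℝ} (hε : 0 < ε)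
    (hf : IntegrableOn (fun t => t ^ (s₀ - ε - 1) • f t) (Ioc 0 1)) :
    ContinuousAt (fun s : ℝ => ∫ t in Ioc (0:ℝ) 1, t ^ (s - 1) • f t) s₀ := by
  refine continuousAt_of_dominated (bound := fun t => ‖t ^ (s₀ - ε - 1) • f t‖) ?_ ?_ hf.norm ?_
  · refine Eventually.of_forall fun s => ?_
    have hmeas : AEStronglyMeasurable (fun t : ℝ => t ^ (s - s₀ + ε) • (t ^ (s₀ - ε - 1) • f t))
        (volume.restrict (Ioc 0 1)) :=
      (measurable_id.pow_const _).aestronglyMeasurable.smul hf.aestronglyMeasurable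
    refine hmeas.congr ?_
    filter_upwards [ae_restrict_mem measurableSet_Ioc] with t ht
    rw [smul_smul, ← rpow_add ht.1]
    ring_nf
  · filter_upwards [Ioi_mem_nhds (sub_lt_self s₀ hε)] with s (hs : s₀ - ε < s)
    filter_upwards [ae_restrict_mem measurableSet_Ioc] with t ht
    rw [norm_smul, norm_smul, norm_of_nonneg (rpow_nonneg ht.1.le _),
      norm_of_nonneg (rpow_nonneg ht.1.le _)]
    exact mul_le_mul_of_nonneg_right (rpow_le_rpow_of_exponent_ge ht.1 ht.2 (by linarith))
      (norm_nonneg _)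
  · filter_upwards [ae_restrict_mem measurableSet_Ioc] with t ht
    exact ((continuousAt_const_rpow ht.1.ne').comp (continuousAt_id.sub continuousAt_const)).smul
      continuousAt_const

end

theorem stmt_9 (R g θ : ℝ) (hR : 0 < R) (hg : g ≠ 0)
    (𝒯 : ℝ → ℂ)
    (h𝒯 : ∀ t : ℝ, 0 < t → 𝒯 t =
      -((R / (2 * Real.sqrt (π * t)) : ℝ) : ℂ) *
        Complex.exp ((-(R ^ 2 * g ^ 2) / (4 * t) : ℝ) : ℂ) *
        Complex.exp (-(Complex.I * (θ : ℂ) * (g : ℂ)))) :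
    deriv (fun s : ℝ => ((Real.Gamma s : ℂ))⁻¹ *
        ∫ t in Ioc (0:ℝ) 1, ((t ^ (s - 1) : ℝ) : ℂ) * 𝒯 t) 0
      + ∫ t in Ici (1:ℝ), ((t : ℂ))⁻¹ * 𝒯 t
      = -Complex.exp (-(Complex.I * (θ : ℂ) * (g : ℂ))) / ((|g| : ℝ) : ℂ) := by
  set c := Complex.exp (-(Complex.I * θ * g))
  have hRg : R * g ≠ 0 := mul_ne_zero hR.ne' hg
  have hkernel : ∀ t ∈ Ioi (0:ℝ), 𝒯 t = heatKernel (R * g) t • (-R * c) :=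
    fun t ht => (h𝒯 t ht).trans (heatKernel_mul_smul_eq R g t c).symm
  have hint : ∀ a : ℝ, a < -1/2 → IntegrableOn (fun t : ℝ => t ^ a • 𝒯 t) (Ioi 0) :=
    fun a ha => IntegrableOn.congr_fun
      ((integrableOn_rpow_mul_heatKernel hRg ha).smul_const (-(R : ℂ) * c))
      (fun t ht => by rw [hkernel t ht, smul_smul]) measurableSet_Ioi
  have hcont : ContinuousAt (fun s : ℝ => ∫ t in Ioc (0:ℝ) 1, t ^ (s - 1) • 𝒯 t) 0 :=
    continuousAt_integral_rpow_smul_Ioc one_half_pos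
      ((hint _ (by norm_num)).mono_set Ioc_subset_Ioi_self)
  simp only [← Complex.ofReal_inv, ← Complex.real_smul]
  rw [(hasDerivAt_inv_Gamma_smul_zero hcont).deriv, integral_Ici_eq_integral_Ioi, zero_sub]
  simp only [← rpow_neg_one]
  rw [← setIntegral_union Ioc_disjoint_Ioi_same measurableSet_Ioi
      ((hint _ (by norm_num)).mono_set Ioc_subset_Ioi_self)
      ((hint _ (by norm_num)).mono_set (Ioi_subset_Ioi zero_le_one)),
    Ioc_union_Ioi_eq_Ioi zero_le_one,
    setIntegral_congr_fun measurableSet_Ioi fun t ht => by rw [hkernel t ht, smul_smul],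
    integral_smul_const, integral_rpow_neg_one_mul_heatKernel hRg, abs_mul, abs_of_pos hR,
    Complex.real_smul]
  have hR' : (R : ℂ) ≠ 0 := by exact_mod_cast hR.ne'
  push_cast
  field_simp
end

section
/- Let σ > 0 be a real number. The real-variable function s ↦ Γ(s − 1/2) · σ^{1/2 − s} · (Γ(s))⁻¹ is differentiable at s = 0 with derivative equal to −2·√(π·σ). -/
open Real

/-!
Since `Γ s = Γ (s + 1) / s`, the function `1 / Γ` vanishes at `0` with derivative `1` there. The
derivative at `0` of the product is therefore the value at `0` of the continuous factor
`Γ (s - 1/2) σ ^ (1/2 - s)`, namely `Γ (-1/2) √σ = -2 √π √σ`.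
-/

theorem ContinuousAt.hasDerivAt_mul_of_eq_zero {𝕜 : Type*} [NontriviallyNormedField 𝕜]
    {f g : 𝕜 → 𝕜} {g' x : 𝕜} (hf : ContinuousAt f x) (hg : HasDerivAt g g' x) (hg0 : g x = 0) :
    HasDerivAt (fun y => f y * g y) (f x * g') x := by
  rw [hasDerivAt_iff_tendsto_slope] at hg ⊢
  refine ((hf.tendsto.mono_left nhdsWithin_le_nhds).mul hg).congr fun y => ?_
  simp only [slope_def_field, hg0, mul_zero, sub_zero, mul_div_assoc]

namespace Real

theorem inv_Gamma_eq_mul_inv_Gamma_add_one (s : ℝ) : (Gamma s)⁻¹ = s * (Gamma (s + 1))⁻¹ := by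
  rcases eq_or_ne s 0 with rfl | hs
  · simp
  · rw [Gamma_add_one hs, mul_inv, ← mul_assoc, mul_inv_cancel₀ hs, one_mul]

theorem hasDerivAt_inv_Gamma_zero : HasDerivAt (fun s => (Gamma s)⁻¹) 1 0 := by
  have hΓ : DifferentiableAt ℝ (fun s => Gamma (s + 1)) 0 := by
    refine DifferentiableAt.comp (g := Gamma) 0 ?_ (differentiableAt_id.add_const 1)
    simpa using differentiableOn_Gamma_Ioi.differentiableAt (Ioi_mem_nhds one_pos)
  rw [funext inv_Gamma_eq_mul_inv_Gamma_add_one]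
  exact ((hasDerivAt_id' 0).fun_mul (hΓ.fun_inv (by simp)).hasDerivAt).congr_deriv (by simp)

theorem Gamma_neg_one_half : Gamma (-(1 / 2)) = -2 * √π := by
  have h := Gamma_add_one (s := -(1 / 2)) (by norm_num)
  rw [show -(1 / 2) + 1 = (1 / 2 : ℝ) by norm_num, Gamma_one_half_eq] at h
  linarith

end Real

theorem stmt_10 (σ : ℝ) (hσ : 0 < σ) :
    HasDerivAt (fun s : ℝ => Real.Gamma (s - 1/2) * σ ^ (1/2 - s) * (Real.Gamma s)⁻¹)
      (-2 * Real.sqrt (π * σ)) 0 := by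
  have hΓ : ContinuousAt (fun s : ℝ => Gamma (s - 1/2)) 0 := by
    refine ContinuousAt.comp (g := Gamma) ?_ (continuousAt_id.sub continuousAt_const)
    refine (differentiableAt_Gamma fun m hm => ?_).continuousAt
    have h : ((2 * m : ℕ) : ℝ) = 1 := by push_cast; linarith
    have := Nat.cast_eq_one.mp h
    omega
  have hpow : ContinuousAt (fun s : ℝ => σ ^ (1/2 - s)) 0 :=
    continuousAt_const.rpow (continuousAt_const.sub continuousAt_id) (Or.inl hσ.ne')
  refine ((hΓ.fun_mul hpow).hasDerivAt_mul_of_eq_zero hasDerivAt_inv_Gamma_zero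
    (by simp)).congr_deriv ?_
  rw [mul_one, zero_sub, sub_zero, Gamma_neg_one_half, ← sqrt_eq_rpow, sqrt_mul pi_pos.le]
  ring
end

section
/- Let R > 0, let r ∈ ℝ with r ∉ ℤ, let θ ∈ ℝ, and let σ > 0. Then (R/(2√π)) · ∫₀^∞ t^{−3/2} · exp(−σ·t) · ( Σ_{n ∈ ℤ} exp(−R²(n−r)²/(4t)) · exp(−i·θ·(n−r)) ) dt = Σ_{n ∈ ℤ} (1/|n−r|) · exp(−R·|n−r|·√σ) · exp(−i·θ·(n−r)); in particular, all sums and the integral converge absolutely. -/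
/-!
Substituting `t = x⁻²` and then `u = a x / 2` turns the Laplace transform
`∫₀^∞ t^{-3/2} e^{-b t} e^{-a²/(4t)} dt` into `(4/a) ∫₀^∞ e^{-(u² + c²/u²)} du` with `c = a√b/2`.
The Cauchy–Schlömilch substitution `v = u - c/u` reduces this to the Gaussian integral, so the
`n`-th term integrates to `(2√π / (R|n - r|)) e^{-R|n - r|√σ}`. As `r ∉ ℤ` keeps `|n - r|` away
from `0`, these values are dominated by `e^{-R√σ|n - r|}`, which is summable over `ℤ`; hence the sum
may be integrated term by term.
-/

open MeasureTheory Real Set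

theorem integrable_tsum_of_summable_integral_norm {α ι E : Type*} [MeasurableSpace α]
    {μ : Measure α} [NormedAddCommGroup E] [CompleteSpace E] [Countable ι] {F : ι → α → E}
    (hF_int : ∀ i, Integrable (F i) μ) (hF_sum : Summable fun i ↦ ∫ a, ‖F i a‖ ∂μ) :
    Integrable (fun a ↦ ∑' i, F i a) μ := by
  have hmeas (i : ι) : AEMeasurable (fun a ↦ ‖F i a‖ₑ) μ := (hF_int i).1.enorm
  have hfin : ∫⁻ a, ∑' i, ‖F i a‖ₑ ∂μ ≠ ⊤ := by
    have (i : ι) : ∫⁻ a, ‖F i a‖ₑ ∂μ = ENNReal.ofReal (∫ a, ‖F i a‖ ∂μ) :=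
      (ofReal_integral_norm_eq_lintegral_enorm (hF_int i)).symm
    rw [lintegral_tsum hmeas, funext this, ← ENNReal.ofReal_tsum_of_nonneg
      (fun i ↦ integral_nonneg fun a ↦ norm_nonneg _) hF_sum]
    exact ENNReal.ofReal_ne_top
  have hsummable : ∀ᵐ a ∂μ, Summable fun i ↦ F i a := by
    filter_upwards [ae_lt_top' (AEMeasurable.tsum hmeas) hfin] with a ha
    exact .of_norm (ENNReal.tsum_coe_ne_top_iff_summable_coe.mp ha.ne)
  refine ⟨aestronglyMeasurable_of_tendsto_ae Filter.atTop
    (fun s ↦ Finset.aestronglyMeasurable_sum s fun i _ ↦ (hF_int i).1) ?_, ?_⟩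
  · filter_upwards [hsummable] with a ha
    have h : Filter.Tendsto (fun s : Finset ι ↦ ∑ i ∈ s, F i a) Filter.atTop
        (nhds (∑' i, F i a)) := ha.hasSum
    simpa only [Finset.sum_apply] using h
  · exact (lintegral_mono fun a ↦ enorm_tsum_le_tsum_enorm).trans_lt hfin.lt_top

section CauchySchlomilch

variable {E : Type*} [NormedAddCommGroup E] [NormedSpace ℝ E] {c : ℝ}

lemma hasDerivAt_const_div {u : ℝ} (hu : u ≠ 0) :
    HasDerivAt (fun v ↦ c / v) (-(c / u ^ 2)) u := by
  simpa [div_eq_mul_inv] using (hasDerivAt_inv hu).const_mul c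

lemma image_const_div_Ioi_zero (hc : 0 < c) : (fun u ↦ c / u) '' Ioi 0 = Ioi 0 := by
  ext v
  refine ⟨fun ⟨u, hu, huv⟩ ↦ huv ▸ div_pos hc hu, fun hv ↦ ⟨c / v, div_pos hc hv, ?_⟩⟩
  exact div_div_cancel₀ hc.ne'

lemma injective_const_div (hc : c ≠ 0) : Function.Injective fun u : ℝ ↦ c / u :=
  fun u w h ↦ by simpa [div_eq_mul_inv, hc] using h

lemma integral_Ioi_comp_const_div (hc : 0 < c) (g : ℝ → E) :
    ∫ u in Ioi 0, (c / u ^ 2) • g (c / u) = ∫ u in Ioi 0, g u := by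
  have := integral_image_eq_integral_abs_deriv_smul measurableSet_Ioi
    (fun u hu ↦ (hasDerivAt_const_div (c := c) (ne_of_gt hu)).hasDerivWithinAt)
    (injective_const_div hc.ne').injOn g
  rw [image_const_div_Ioi_zero hc] at this
  rw [this]
  refine setIntegral_congr_fun measurableSet_Ioi fun u _ ↦ ?_
  rw [abs_neg, abs_of_nonneg (by positivity)]

lemma integrableOn_Ioi_comp_const_div_iff (hc : 0 < c) (g : ℝ → E) :
    IntegrableOn (fun u ↦ (c / u ^ 2) • g (c / u)) (Ioi 0) ↔ IntegrableOn g (Ioi 0) := by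
  have := integrableOn_image_iff_integrableOn_abs_deriv_smul measurableSet_Ioi
    (fun u hu ↦ (hasDerivAt_const_div (c := c) (ne_of_gt hu)).hasDerivWithinAt)
    (injective_const_div hc.ne').injOn g
  rw [image_const_div_Ioi_zero hc] at this
  rw [this]
  refine integrableOn_congr_fun (fun u _ ↦ ?_) measurableSet_Ioi
  rw [abs_neg, abs_of_nonneg (by positivity)]

lemma hasDerivAt_sub_const_div {u : ℝ} (hu : u ≠ 0) :
    HasDerivAt (fun v ↦ v - c / v) (1 + c / u ^ 2) u := by
  simpa [sub_neg_eq_add] using (hasDerivAt_id' u).fun_sub (hasDerivAt_const_div (c := c) hu)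

lemma strictMonoOn_sub_const_div (hc : 0 < c) : StrictMonoOn (fun u ↦ u - c / u) (Ioi 0) :=
  fun _ hu _ _ huw ↦ sub_lt_sub huw (div_lt_div_of_pos_left hc hu huw)

-- `u = (v + √(v² + 4c)) / 2` is the positive root of `u² - v u - c = 0`.
lemma image_sub_const_div_Ioi_zero (hc : 0 < c) : (fun u ↦ u - c / u) '' Ioi 0 = univ := by
  refine eq_univ_of_forall fun v ↦ ?_
  set s := √(v ^ 2 + 4 * c)
  have hs : s ^ 2 = v ^ 2 + 4 * c := sq_sqrt (by positivity)
  have hvs : |v| < s := by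
    rw [← sqrt_sq_eq_abs]
    exact sqrt_lt_sqrt (sq_nonneg v) (by linarith)
  have hpos : 0 < (v + s) / 2 := by linarith [neg_abs_le v]
  refine ⟨(v + s) / 2, hpos, ?_⟩
  have hne : v + s ≠ 0 := by linarith
  field_simp
  linear_combination hs

variable {f : ℝ → E}

lemma integrableOn_Ioi_comp_sub_const_div (hc : 0 < c) (hf : Integrable f) :
    IntegrableOn (fun u ↦ f (u - c / u)) (Ioi 0) := by
  have hcov := (integrableOn_image_iff_integrableOn_abs_deriv_smul measurableSet_Ioi
    (fun u hu ↦ (hasDerivAt_sub_const_div (c := c) (ne_of_gt hu)).hasDerivWithinAt)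
    (strictMonoOn_sub_const_div hc).injOn f).1
    (by rw [image_sub_const_div_Ioi_zero hc]; exact hf.integrableOn)
  have hjac : IntegrableOn (fun u ↦ (1 + c / u ^ 2) • f (u - c / u)) (Ioi 0) :=
    hcov.congr_fun (fun u _ ↦ by dsimp only; rw [abs_of_pos (by positivity)]) measurableSet_Ioi
  have hbound (u : ℝ) : ‖(1 + c / u ^ 2)⁻¹‖ ≤ 1 := by
    have : 1 ≤ 1 + c / u ^ 2 := le_add_of_nonneg_right (by positivity)
    rw [norm_inv, Real.norm_of_nonneg (by linarith)]
    exact inv_le_one_of_one_le₀ this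
  have hmeas : Measurable fun u : ℝ ↦ (1 + c / u ^ 2)⁻¹ := by fun_prop
  refine IntegrableOn.congr_fun (hjac.bdd_smul 1 hmeas.aestronglyMeasurable (.of_forall hbound))
    (fun u _ ↦ ?_) measurableSet_Ioi
  have : 1 + c / u ^ 2 ≠ 0 := by positivity
  simp [smul_smul, this]

-- Cauchy–Schlömilch: `u ↦ c / u` maps `u - c / u` to its negative, so the Jacobian
-- `1 + c / u²` of `u ↦ u - c / u` contributes the same integral twice.
theorem integral_Ioi_comp_sub_const_div (hc : 0 < c) (hf : Integrable f)
    (heven : ∀ x, f (-x) = f x) :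
    ∫ u in Ioi 0, f (u - c / u) = (2 : ℝ)⁻¹ • ∫ x, f x := by
  have hcov := integral_image_eq_integral_abs_deriv_smul measurableSet_Ioi
    (fun u hu ↦ (hasDerivAt_sub_const_div (c := c) (ne_of_gt hu)).hasDerivWithinAt)
    (strictMonoOn_sub_const_div hc).injOn f
  rw [image_sub_const_div_Ioi_zero hc, setIntegral_univ] at hcov
  have hflip : EqOn (fun u ↦ (c / u ^ 2) • f (c / u - c / (c / u)))
      (fun u ↦ (c / u ^ 2) • f (u - c / u)) (Ioi 0) := fun u _ ↦ by
    dsimp only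
    rw [div_div_cancel₀ hc.ne', ← heven, neg_sub]
  have hint := integrableOn_Ioi_comp_sub_const_div hc hf
  have hint' : IntegrableOn (fun u ↦ (c / u ^ 2) • f (u - c / u)) (Ioi 0) :=
    ((integrableOn_Ioi_comp_const_div_iff hc _).2 hint).congr_fun hflip measurableSet_Ioi
  have hrecip : ∫ u in Ioi 0, (c / u ^ 2) • f (u - c / u) = ∫ u in Ioi 0, f (u - c / u) := by
    rw [← setIntegral_congr_fun measurableSet_Ioi hflip]
    exact integral_Ioi_comp_const_div hc fun v ↦ f (v - c / v)
  have htwice : ∫ x, f x = (2 : ℝ) • ∫ u in Ioi 0, f (u - c / u) := calc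
    ∫ x, f x = ∫ u in Ioi 0, (f (u - c / u) + (c / u ^ 2) • f (u - c / u)) := by
      rw [hcov]
      refine setIntegral_congr_fun measurableSet_Ioi fun u _ ↦ ?_
      rw [abs_of_pos (by positivity), add_smul, one_smul]
    _ = (2 : ℝ) • ∫ u in Ioi 0, f (u - c / u) := by
      rw [integral_add hint hint', hrecip, two_smul]
  rw [htwice, smul_smul, inv_mul_cancel₀ two_ne_zero, one_smul]

end CauchySchlomilch

lemma integrable_exp_neg_sq : Integrable fun x : ℝ ↦ exp (-x ^ 2) := by
  simpa using integrable_exp_neg_mul_sq one_pos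

lemma exp_neg_sq_add_sq_div_sq {c u : ℝ} (hu : u ≠ 0) :
    exp (-(u ^ 2 + c ^ 2 / u ^ 2)) = exp (-(2 * c)) * exp (-(u - c / u) ^ 2) := by
  rw [← exp_add]
  congr 1
  field_simp
  ring

lemma integrableOn_exp_neg_sq_add_sq_div_sq {c : ℝ} (hc : 0 < c) :
    IntegrableOn (fun u ↦ exp (-(u ^ 2 + c ^ 2 / u ^ 2))) (Ioi 0) :=
  IntegrableOn.congr_fun
    ((integrableOn_Ioi_comp_sub_const_div hc integrable_exp_neg_sq).const_mul (exp (-(2 * c))))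
    (fun _ hu ↦ (exp_neg_sq_add_sq_div_sq (ne_of_gt hu)).symm) measurableSet_Ioi

lemma integral_exp_neg_sq_add_sq_div_sq {c : ℝ} (hc : 0 < c) :
    ∫ u in Ioi 0, exp (-(u ^ 2 + c ^ 2 / u ^ 2)) = √π / 2 * exp (-(2 * c)) := by
  have hgauss : ∫ x, exp (-x ^ 2) = √π := by simpa using integral_gaussian 1
  rw [setIntegral_congr_fun measurableSet_Ioi fun u hu ↦ exp_neg_sq_add_sq_div_sq (ne_of_gt hu),
    integral_const_mul, integral_Ioi_comp_sub_const_div hc integrable_exp_neg_sq (by simp),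
    hgauss, smul_eq_mul]
  ring

section HeatKernel

variable {a b : ℝ}

lemma heat_integrand_comp_rpow_neg_two (ha : 0 < a) (hb : 0 < b) {x : ℝ} (hx : 0 < x) :
    (|(-2 : ℝ)| * x ^ ((-2 : ℝ) - 1)) • ((x ^ (-2 : ℝ)) ^ (-(3 : ℝ) / 2) *
      exp (-b * x ^ (-2 : ℝ)) * exp (-a ^ 2 / (4 * x ^ (-2 : ℝ))))
      = 2 * exp (-((a / 2 * x) ^ 2 + (a * √b / 2) ^ 2 / (a / 2 * x) ^ 2)) := by
  have hpow : (x ^ (-2 : ℝ)) ^ (-(3 : ℝ) / 2) = x ^ 3 := by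
    rw [← rpow_mul hx.le]
    norm_num
  have hjac : x ^ ((-2 : ℝ) - 1) = (x ^ 3)⁻¹ := by
    norm_num [rpow_neg hx.le]
  have hinv : x ^ (-2 : ℝ) = (x ^ 2)⁻¹ := by
    rw [rpow_neg hx.le, rpow_two]
  have hexp : -((a / 2 * x) ^ 2 + (a * √b / 2) ^ 2 / (a / 2 * x) ^ 2)
      = -b * (x ^ 2)⁻¹ + -a ^ 2 / (4 * (x ^ 2)⁻¹) := by
    rw [div_pow, mul_pow a, sq_sqrt hb.le]
    field_simp
    ring
  rw [hpow, hjac, hinv, hexp, exp_add, smul_eq_mul, abs_neg, abs_two]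
  field_simp

theorem integrableOn_rpow_mul_exp_mul_exp (ha : 0 < a) (hb : 0 < b) :
    IntegrableOn (fun t ↦ t ^ (-(3 : ℝ) / 2) * exp (-b * t) * exp (-a ^ 2 / (4 * t))) (Ioi 0) := by
  rw [← integrableOn_Ioi_comp_rpow_iff _ (by norm_num : (-2 : ℝ) ≠ 0)]
  refine IntegrableOn.congr_fun ?_
    (fun x hx ↦ (heat_integrand_comp_rpow_neg_two ha hb hx).symm) measurableSet_Ioi
  have := (integrableOn_exp_neg_sq_add_sq_div_sq (by positivity : 0 < a * √b / 2)).const_mul 2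
  rw [← mul_zero (a / 2)] at this
  exact (integrableOn_Ioi_comp_mul_left_iff _ 0 (half_pos ha)).2 this

theorem integral_rpow_mul_exp_mul_exp (ha : 0 < a) (hb : 0 < b) :
    ∫ t in Ioi 0, t ^ (-(3 : ℝ) / 2) * exp (-b * t) * exp (-a ^ 2 / (4 * t))
      = 2 * √π / a * exp (-(a * √b)) := by
  rw [← integral_comp_rpow_Ioi _ (by norm_num : (-2 : ℝ) ≠ 0),
    setIntegral_congr_fun measurableSet_Ioi fun x hx ↦ heat_integrand_comp_rpow_neg_two ha hb hx,
    integral_comp_mul_left_Ioi (fun u ↦ 2 * exp (-(u ^ 2 + (a * √b / 2) ^ 2 / u ^ 2))) 0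
      (half_pos ha), mul_zero, integral_const_mul,
    integral_exp_neg_sq_add_sq_div_sq (by positivity), smul_eq_mul]
  field_simp

end HeatKernel

lemma integrableOn_heat_term {R σ x : ℝ} (hR : 0 < R) (hσ : 0 < σ) (hx : x ≠ 0) :
    IntegrableOn (fun t ↦ t ^ (-(3 : ℝ) / 2) * exp (-σ * t) * exp (-(R ^ 2 * x ^ 2) / (4 * t)))
      (Ioi 0) := by
  simpa only [mul_pow, sq_abs] using
    integrableOn_rpow_mul_exp_mul_exp (mul_pos hR (abs_pos.2 hx)) hσ

lemma integral_heat_term {R σ x : ℝ} (hR : 0 < R) (hσ : 0 < σ) (hx : x ≠ 0) :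
    ∫ t in Ioi 0, t ^ (-(3 : ℝ) / 2) * exp (-σ * t) * exp (-(R ^ 2 * x ^ 2) / (4 * t))
      = 2 * √π / R * (1 / |x| * exp (-R * |x| * √σ)) := by
  have := integral_rpow_mul_exp_mul_exp (mul_pos hR (abs_pos.2 hx)) hσ
  rw [mul_pow, sq_abs] at this
  rw [this]
  field_simp

section LatticeSums

lemma summable_exp_neg_mul_abs_int {c : ℝ} (hc : 0 < c) :
    Summable fun n : ℤ ↦ exp (-c * |(n : ℝ)|) := by
  have hgeom : Summable fun n : ℕ ↦ exp (-c * n) := by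
    simpa only [mul_comm, exp_nat_mul] using
      summable_geometric_of_lt_one (exp_pos _).le (exp_lt_one_iff.2 (neg_lt_zero.2 hc))
  exact .of_nat_of_neg (by simpa using hgeom) (by simpa using hgeom)

lemma summable_exp_neg_mul_abs_int_sub {c : ℝ} (hc : 0 < c) (r : ℝ) :
    Summable fun n : ℤ ↦ exp (-c * |(n : ℝ) - r|) := by
  refine .of_nonneg_of_le (fun n ↦ (exp_pos _).le) (fun n ↦ ?_)
    ((summable_exp_neg_mul_abs_int hc).mul_left (exp (c * |r|)))
  rw [← exp_add]
  apply exp_le_exp.2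
  nlinarith [abs_sub_abs_le_abs_sub (n : ℝ) r]

lemma summable_exp_neg_mul_int_sub_sq {k : ℝ} (hk : 0 < k) (r : ℝ) :
    Summable fun n : ℤ ↦ exp (-k * ((n : ℝ) - r) ^ 2) := by
  refine .of_nonneg_of_le (fun n ↦ (exp_pos _).le) (fun n ↦ ?_)
    ((summable_exp_neg_mul_abs_int_sub (by positivity : 0 < 2 * k) r).mul_left (exp k))
  rw [← exp_add, ← sq_abs]
  apply exp_le_exp.2
  nlinarith [mul_nonneg hk.le (sq_nonneg (|(n : ℝ) - r| - 1))]

-- `round r` is the lattice point nearest to `r`, so `|n - r|` is bounded below by `|r - round r|`.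
lemma summable_one_div_abs_int_sub_mul_exp {c r : ℝ} (hc : 0 < c) (hr : ∀ m : ℤ, r ≠ m) :
    Summable fun n : ℤ ↦ 1 / |(n : ℝ) - r| * exp (-c * |(n : ℝ) - r|) := by
  have hδ : 0 < |r - round r| := abs_pos.2 (sub_ne_zero.2 (hr _))
  refine .of_nonneg_of_le (fun n ↦ by positivity) (fun n ↦ ?_)
    ((summable_exp_neg_mul_abs_int_sub hc r).mul_left (1 / |r - round r|))
  gcongr 1 / ?_ * _
  exact (round_le r n).trans_eq (abs_sub_comm _ _)

lemma norm_cexp_neg_I_mul (θ x : ℝ) : ‖Complex.exp (-(Complex.I * θ * x))‖ = 1 := by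
  rw [show -(Complex.I * θ * x) = ((-(θ * x) : ℝ) : ℂ) * Complex.I by push_cast; ring,
    Complex.norm_exp_ofReal_mul_I]

lemma Summable.ofReal_mul_cexp_neg_I_mul {ι : Type*} {f : ι → ℝ} (hf : Summable f) (θ : ℝ)
    (x : ι → ℝ) : Summable fun i ↦ (f i : ℂ) * Complex.exp (-(Complex.I * θ * (x i : ℂ))) :=
  .of_norm (by simpa only [norm_mul, norm_cexp_neg_I_mul, mul_one, Complex.norm_real] using hf.norm)

end LatticeSums

theorem integral_ofReal_mul_tsum_mul {α ι : Type*} [MeasurableSpace α] {μ : Measure α}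
    [Countable ι] {w : α → ℝ} {g : ι → α → ℝ} {e : ι → ℂ} (he : ∀ i, ‖e i‖ = 1)
    (hint : ∀ i, Integrable (fun a ↦ w a * g i a) μ)
    (hnonneg : ∀ i, 0 ≤ᵐ[μ] fun a ↦ w a * g i a)
    (hsum : Summable fun i ↦ ∫ a, w a * g i a ∂μ) :
    Integrable (fun a ↦ (w a : ℂ) * ∑' i, (g i a : ℂ) * e i) μ ∧
      ∫ a, (w a : ℂ) * ∑' i, (g i a : ℂ) * e i ∂μ
        = ∑' i, ((∫ a, w a * g i a ∂μ : ℝ) : ℂ) * e i := by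
  set F : ι → α → ℂ := fun i a ↦ ((w a * g i a : ℝ) : ℂ) * e i
  have hF : (fun a ↦ (w a : ℂ) * ∑' i, (g i a : ℂ) * e i) = fun a ↦ ∑' i, F i a := by
    ext a
    rw [← tsum_mul_left]
    push_cast [F]
    ring_nf
  have hF_int (i : ι) : Integrable (F i) μ := (hint i).ofReal.mul_const _
  have hF_norm (i : ι) : ∫ a, ‖F i a‖ ∂μ = ∫ a, w a * g i a ∂μ := by
    refine integral_congr_ae ?_
    filter_upwards [hnonneg i] with a ha
    simp only [F, norm_mul, he, mul_one, Complex.norm_real, Real.norm_of_nonneg ha]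
  have hF_sum : Summable fun i ↦ ∫ a, ‖F i a‖ ∂μ := by simpa only [hF_norm] using hsum
  rw [hF, ← integral_tsum_of_summable_integral_norm hF_int hF_sum]
  refine ⟨integrable_tsum_of_summable_integral_norm hF_int hF_sum, tsum_congr fun i ↦ ?_⟩
  rw [integral_mul_const, integral_complex_ofReal]

theorem stmt_11 (R r θ σ : ℝ) (hR : 0 < R) (hr : ∀ m : ℤ, r ≠ (m : ℝ)) (hσ : 0 < σ) :
    (∀ t : ℝ, 0 < t → Summable fun n : ℤ =>
      ((Real.exp (-(R ^ 2 * ((n : ℝ) - r) ^ 2) / (4 * t)) : ℝ) : ℂ) *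
        Complex.exp (-(Complex.I * (θ : ℂ) * (((n : ℝ) - r : ℝ) : ℂ)))) ∧
    IntegrableOn (fun t : ℝ => ((t ^ (-(3:ℝ)/2) * Real.exp (-σ * t) : ℝ) : ℂ) *
      ∑' n : ℤ, ((Real.exp (-(R ^ 2 * ((n : ℝ) - r) ^ 2) / (4 * t)) : ℝ) : ℂ) *
        Complex.exp (-(Complex.I * (θ : ℂ) * (((n : ℝ) - r : ℝ) : ℂ)))) (Ioi 0) volume ∧
    Summable (fun n : ℤ =>
      ((1 / |(n : ℝ) - r| * Real.exp (-R * |(n : ℝ) - r| * Real.sqrt σ) : ℝ) : ℂ) *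
        Complex.exp (-(Complex.I * (θ : ℂ) * (((n : ℝ) - r : ℝ) : ℂ)))) ∧
    ((R / (2 * Real.sqrt π) : ℝ) : ℂ) *
        ∫ t in Ioi (0:ℝ), ((t ^ (-(3:ℝ)/2) * Real.exp (-σ * t) : ℝ) : ℂ) *
          ∑' n : ℤ, ((Real.exp (-(R ^ 2 * ((n : ℝ) - r) ^ 2) / (4 * t)) : ℝ) : ℂ) *
            Complex.exp (-(Complex.I * (θ : ℂ) * (((n : ℝ) - r : ℝ) : ℂ)))
      = ∑' n : ℤ,
          ((1 / |(n : ℝ) - r| * Real.exp (-R * |(n : ℝ) - r| * Real.sqrt σ) : ℝ) : ℂ) *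
            Complex.exp (-(Complex.I * (θ : ℂ) * (((n : ℝ) - r : ℝ) : ℂ))) := by
  have hx (n : ℤ) : (n : ℝ) - r ≠ 0 := sub_ne_zero.2 (hr n).symm
  have hdecay : Summable fun n : ℤ ↦ 1 / |(n : ℝ) - r| * exp (-R * |(n : ℝ) - r| * √σ) :=
    (summable_one_div_abs_int_sub_mul_exp (mul_pos hR (sqrt_pos.2 hσ)) hr).congr
      fun n ↦ by ring_nf
  obtain ⟨hint, hval⟩ := integral_ofReal_mul_tsum_mul (μ := volume.restrict (Ioi 0))
    (w := fun t ↦ t ^ (-(3 : ℝ) / 2) * exp (-σ * t))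
    (g := fun (n : ℤ) t ↦ exp (-(R ^ 2 * ((n : ℝ) - r) ^ 2) / (4 * t)))
    (fun n ↦ norm_cexp_neg_I_mul θ ((n : ℝ) - r)) (fun n ↦ integrableOn_heat_term hR hσ (hx n))
    (fun n ↦ by
      filter_upwards [ae_restrict_mem measurableSet_Ioi] with t (ht : 0 < t)
      positivity)
    (by simpa only [integral_heat_term hR hσ (hx _)] using hdecay.mul_left (2 * √π / R))
  refine ⟨fun t ht ↦ ?_, hint, hdecay.ofReal_mul_cexp_neg_I_mul θ _, ?_⟩
  · refine Summable.ofReal_mul_cexp_neg_I_mul ?_ θ _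
    exact (summable_exp_neg_mul_int_sub_sq (by positivity : 0 < R ^ 2 / (4 * t)) r).congr
      fun n ↦ by ring_nf
  · rw [hval, ← tsum_mul_left]
    refine tsum_congr fun n ↦ ?_
    rw [integral_heat_term hR hσ (hx n), ← mul_assoc, ← Complex.ofReal_mul]
    congr 2
    field_simp
end

section
/- Let R > 0 and θ ∈ ℝ, and define κ : (0,∞) × ℝ × ℝ → ℂ by κ(t, x, y) = (R/(2√(π·t))) · exp(−R²(x−y)²/(4t) − i·θ·(x−y)). Then κ satisfies the heat equation of the twisted Laplacian Δ = −(1/R²)·(∂/∂x + iθ)²: for all t > 0 and all x, y ∈ ℝ, the t-derivative of t ↦ κ(t, x, y) equals (1/R²) · ( (∂²/∂x²)κ(t, x, y) + 2·i·θ·(∂/∂x)κ(t, x, y) − θ²·κ(t, x, y) ), where ∂/∂x denotes differentiation in the second argument. -/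
/-!
The kernel factors as `κ t x y = e^{-iθ(x-y)} G(t, x-y)`, where `G` is the Gaussian heat
kernel of `R⁻² ∂²`, i.e. `∂ₜG = R⁻² ∂ᵤ²G`. Multiplication by the phase `e^{-iθ(x-y)}`
intertwines `∂ₓ + iθ` with `∂ₓ`, so `(∂ₓ + iθ)²(e^{-iθ(x-y)} G) = e^{-iθ(x-y)} ∂ₓ²G`, and the
twisted heat equation for `κ` is the ordinary one for `G`.
-/

open Real Complex

noncomputable def gaussianKernel (R t u : ℝ) : ℝ :=
  R / (2 * √(π * t)) * Real.exp (-(R ^ 2 * u ^ 2) / (4 * t))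

section GaussianKernel

variable (R : ℝ) {t : ℝ}

theorem hasDerivAt_gaussianKernel (t u : ℝ) :
    HasDerivAt (gaussianKernel R t) (-(R ^ 2 * u / (2 * t)) * gaussianKernel R t u) u := by
  have hexpo : HasDerivAt (fun v : ℝ => -(R ^ 2 * v ^ 2) / (4 * t)) (-(R ^ 2 * u / (2 * t))) u :=
    (((hasDerivAt_pow 2 u).const_mul (R ^ 2)).neg.div_const (4 * t)).congr_deriv (by ring)
  exact (hexpo.exp.const_mul (R / (2 * √(π * t)))).congr_deriv (by unfold gaussianKernel; ring)

theorem hasDerivAt_gaussianKernel_deriv (t u : ℝ) :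
    HasDerivAt (fun v => -(R ^ 2 * v / (2 * t)) * gaussianKernel R t v)
      (((R ^ 2 * u / (2 * t)) ^ 2 - R ^ 2 / (2 * t)) * gaussianKernel R t u) u := by
  have hlin : HasDerivAt (fun v : ℝ => -(R ^ 2 * v / (2 * t))) (-(R ^ 2 / (2 * t))) u :=
    (((hasDerivAt_id' u).const_mul (R ^ 2)).div_const (2 * t)).neg.congr_deriv (by ring)
  exact (hlin.mul (hasDerivAt_gaussianKernel R t u)).congr_deriv (by ring)

theorem hasDerivAt_gaussianKernel_time (ht : 0 < t) (u : ℝ) :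
    HasDerivAt (fun s => gaussianKernel R s u)
      ((R ^ 2 * u ^ 2 / (4 * t ^ 2) - 1 / (2 * t)) * gaussianKernel R t u) t := by
  have hπt : 0 < π * t := mul_pos pi_pos ht
  have hsqrt : √(π * t) ≠ 0 := (sqrt_pos.mpr hπt).ne'
  have hpre : HasDerivAt (fun s => R / (2 * √(π * s))) (-(R / (2 * √(π * t))) / (2 * t)) t := by
    have hden := (((hasDerivAt_id' t).const_mul π).sqrt hπt.ne').const_mul 2
    refine ((hasDerivAt_const t R).div hden (by positivity)).congr_deriv ?_
    field_simp
    rw [sq_sqrt hπt.le]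
    ring
  have hexpo :
      HasDerivAt (fun s => -(R ^ 2 * u ^ 2) / (4 * s)) (R ^ 2 * u ^ 2 / (4 * t ^ 2)) t :=
    ((hasDerivAt_const t _).div ((hasDerivAt_id' t).const_mul 4) (by positivity)).congr_deriv
      (by field_simp; ring)
  refine (hpre.mul hexpo.exp).congr_deriv ?_
  unfold gaussianKernel
  field_simp
  ring

theorem gaussianKernel_heatEquation (hR : R ≠ 0) (ht : 0 < t) (u : ℝ) :
    HasDerivAt (fun s => gaussianKernel R s u)
      (1 / R ^ 2 * (((R ^ 2 * u / (2 * t)) ^ 2 - R ^ 2 / (2 * t)) * gaussianKernel R t u)) t :=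
  (hasDerivAt_gaussianKernel_time R ht u).congr_deriv (by field_simp; ring)

end GaussianKernel

theorem twistedLaplacian_phase_mul (θ y : ℝ) {h h' h'' : ℝ → ℂ}
    (hh : ∀ x, HasDerivAt h (h' x) x) (hh' : ∀ x, HasDerivAt h' (h'' x) x) (x : ℝ) :
    deriv (fun x' => deriv (fun x'' : ℝ => cexp (-(I * θ * (x'' - y))) * h x'') x') x
      + 2 * I * θ * deriv (fun x' : ℝ => cexp (-(I * θ * (x' - y))) * h x') x
      - θ ^ 2 * (cexp (-(I * θ * (x - y))) * h x)
      = cexp (-(I * θ * (x - y))) * h'' x := by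
  have he : ∀ x : ℝ, HasDerivAt (fun x : ℝ => cexp (-(I * θ * (x - y))))
      (-(I * θ) * cexp (-(I * θ * (x - y)))) x := fun x =>
    ((((hasDerivAt_id' x).ofReal_comp.sub_const (y : ℂ)).const_mul (I * θ)).fun_neg.cexp
      ).congr_deriv (by simp only [ofReal_one]; ring)
  have hf : ∀ x : ℝ, HasDerivAt (fun x : ℝ => cexp (-(I * θ * (x - y))) * h x)
      (cexp (-(I * θ * (x - y))) * (h' x - I * θ * h x)) x := fun x =>
    ((he x).mul (hh x)).congr_deriv (by ring)
  have hf' : HasDerivAt (fun x : ℝ => cexp (-(I * θ * (x - y))) * (h' x - I * θ * h x))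
      (cexp (-(I * θ * (x - y))) * (h'' x - 2 * I * θ * h' x - θ ^ 2 * h x)) x :=
    ((he x).mul ((hh' x).fun_sub ((hh x).const_mul (I * θ)))).congr_deriv
      (by linear_combination (θ : ℂ) ^ 2 * cexp (-(I * θ * (x - y))) * h x * Complex.I_sq)
  rw [(hf x).deriv, funext fun x => (hf x).deriv, hf'.deriv]
  linear_combination -2 * (θ : ℂ) ^ 2 * cexp (-(I * θ * (x - y))) * h x * Complex.I_sq

theorem stmt_13 (R θ : ℝ) (hR : 0 < R)
    (κ : ℝ → ℝ → ℝ → ℂ)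
    (hκ : ∀ t x y : ℝ, 0 < t → κ t x y =
      ((R / (2 * Real.sqrt (π * t)) : ℝ) : ℂ) *
        Complex.exp (((-(R ^ 2 * (x - y) ^ 2) / (4 * t) : ℝ) : ℂ)
          - Complex.I * (θ : ℂ) * ((x : ℂ) - (y : ℂ)))) :
    ∀ t x y : ℝ, 0 < t →
      deriv (fun t' : ℝ => κ t' x y) t =
        ((1 / R ^ 2 : ℝ) : ℂ) *
          (deriv (fun x' : ℝ => deriv (fun x'' : ℝ => κ t x'' y) x') x
            + 2 * Complex.I * (θ : ℂ) * deriv (fun x' : ℝ => κ t x' y) x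
            - (θ : ℂ) ^ 2 * κ t x y) := by
  intro t x y ht
  have hκ' : ∀ s x', 0 < s →
      κ s x' y = cexp (-(I * θ * (x' - y))) * (gaussianKernel R s (x' - y) : ℂ) := by
    intro s x' hs
    rw [hκ s x' y hs, sub_eq_add_neg, Complex.exp_add, gaussianKernel]
    push_cast
    ring
  have htime : HasDerivAt (fun s => κ s x y) (cexp (-(I * θ * (x - y))) *
      ((1 / R ^ 2 * (((R ^ 2 * (x - y) / (2 * t)) ^ 2 - R ^ 2 / (2 * t)) *
        gaussianKernel R t (x - y)) : ℝ) : ℂ)) t :=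
    ((gaussianKernel_heatEquation R hR.ne' ht (x - y)).ofReal_comp.const_mul _
      ).congr_of_eventuallyEq
        (by filter_upwards [eventually_gt_nhds ht] with s hs using hκ' s x hs)
  rw [htime.deriv, funext fun x' => hκ' t x' ht, hκ' t x ht,
    twistedLaplacian_phase_mul θ y
      (fun x' => ((hasDerivAt_gaussianKernel R t (x' - y)).comp_sub_const x' y).ofReal_comp)
      (fun x' => ((hasDerivAt_gaussianKernel_deriv R t (x' - y)).comp_sub_const x' y).ofReal_comp)]
  push_cast
  ring
end

section
/- For all t > 0 and all x ∈ ℝ, ∫_ℝ (sinh((i·x + y)/2))² · exp(−y²/t) dy = (√(π·t)/2) · (exp(t/4)·cos(x) − 1), where sinh is the complex hyperbolic sine, the integrand is a complex-valued function of y ∈ ℝ, and the equality holds in ℂ (the right-hand side being real). -/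
/-!
Writing `sinh (w / 2) ^ 2 = (exp w + exp (-w) - 2) / 4` turns the integral into three Gaussian
integrals `∫ exp (c y + d) exp (-y² / t) dy = √(π t) exp (t c² / 4 + d)` (complete the square),
with `(c, d) = (1, i x), (-1, -i x), (0, 0)`; then `exp (i x) + exp (-i x) = 2 cos x`.
-/

open MeasureTheory Real

lemma Complex.sinh_half_sq (w : ℂ) :
    Complex.sinh (w / 2) ^ 2 = (Complex.exp w + Complex.exp (-w) - 2) / 4 := by
  have hexp_sq (z : ℂ) : Complex.exp (z / 2) ^ 2 = Complex.exp z := by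
    rw [← Complex.exp_nat_mul]; ring_nf
  have hexp_mul : Complex.exp (w / 2) * Complex.exp (-(w / 2)) = 1 := by
    rw [← Complex.exp_add, add_neg_cancel, Complex.exp_zero]
  have h2 : (2 * Complex.sinh (w / 2)) ^ 2 = Complex.exp w + Complex.exp (-w) - 2 := by
    rw [Complex.two_sinh, sub_sq, mul_assoc, hexp_mul, hexp_sq, ← neg_div, hexp_sq]
    ring
  linear_combination h2 / 4

lemma re_neg_one_div_ofReal_lt_zero {t : ℝ} (ht : 0 < t) : (-1 / (t : ℂ)).re < 0 := by
  rw [← Complex.ofReal_one, ← Complex.ofReal_neg, ← Complex.ofReal_div, Complex.ofReal_re]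
  exact div_neg_of_neg_of_pos (by norm_num) ht

lemma cexp_mul_gaussian_eq_cexp_quadratic (t y : ℝ) (c d : ℂ) :
    Complex.exp (c * y + d) * Complex.exp ((-(y ^ 2) / t : ℝ) : ℂ)
      = Complex.exp (-1 / t * y ^ 2 + c * y + d) := by
  rw [← Complex.exp_add]
  push_cast
  ring_nf

lemma integrable_cexp_mul_gaussian {t : ℝ} (ht : 0 < t) (c d : ℂ) :
    Integrable fun y : ℝ ↦ Complex.exp (c * y + d) * Complex.exp ((-(y ^ 2) / t : ℝ) : ℂ) := by
  simpa only [cexp_mul_gaussian_eq_cexp_quadratic]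
    using integrable_cexp_quadratic' (re_neg_one_div_ofReal_lt_zero ht) c d

lemma integral_cexp_mul_gaussian {t : ℝ} (ht : 0 < t) (c d : ℂ) :
    ∫ y : ℝ, Complex.exp (c * y + d) * Complex.exp ((-(y ^ 2) / t : ℝ) : ℂ)
      = √(π * t) * Complex.exp (t * c ^ 2 / 4 + d) := by
  simp_rw [cexp_mul_gaussian_eq_cexp_quadratic,
    integral_cexp_quadratic (re_neg_one_div_ofReal_lt_zero ht)]
  have hπt : (π : ℂ) / -(-1 / t) = ((π * t : ℝ) : ℂ) := by push_cast; field_simp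
  have hsqrt : ((π * t : ℝ) : ℂ) ^ (1 / 2 : ℂ) = √(π * t) := by
    rw [Real.sqrt_eq_rpow, Complex.ofReal_cpow (by positivity)]
    norm_num
  rw [hπt, hsqrt]
  congr 2
  field_simp
  ring

theorem stmt_14 (t x : ℝ) (ht : 0 < t) :
    ∫ y : ℝ, (Complex.sinh ((Complex.I * (x : ℂ) + (y : ℂ)) / 2)) ^ 2 *
        Complex.exp ((-(y ^ 2) / t : ℝ) : ℂ)
      = ((Real.sqrt (π * t) / 2 : ℝ) : ℂ) *
          ((Real.exp (t / 4) * Real.cos x - 1 : ℝ) : ℂ) := by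
  have hexpand (y : ℝ) (g : ℂ) : Complex.sinh ((Complex.I * x + y) / 2) ^ 2 * g
      = (Complex.exp (1 * y + Complex.I * x) * g + Complex.exp (-1 * y + -(Complex.I * x)) * g
        - 2 * (Complex.exp (0 * y + 0) * g)) / 4 := by
    rw [Complex.sinh_half_sq]
    simp only [zero_mul, add_zero, Complex.exp_zero]
    ring_nf
  have hf := integrable_cexp_mul_gaussian ht 1 (Complex.I * x)
  have hg := integrable_cexp_mul_gaussian ht (-1) (-(Complex.I * x))
  have hh := integrable_cexp_mul_gaussian ht 0 0
  simp_rw [hexpand]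
  rw [integral_div, integral_sub (by exact hf.add hg) (by exact hh.const_mul 2),
    integral_add hf hg, integral_const_mul, integral_cexp_mul_gaussian ht,
    integral_cexp_mul_gaussian ht, integral_cexp_mul_gaussian ht]
  push_cast
  rw [Complex.cos, neg_mul, mul_comm (x : ℂ) Complex.I]
  simp only [one_pow, neg_one_sq, ne_eq, OfNat.ofNat_ne_zero, not_false_eq_true, zero_pow,
    mul_zero, zero_div, add_zero, Complex.exp_zero, mul_one, Complex.exp_add]
  ring
end
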